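/- arXiv:2304.11691 — 10 statements merged into one kernel-verified Lean document; each statement's English description precedes it below -/
import Mathlib

section
/- Let n ≥ 1 and let H = {H_1, …, H_m} be a bipartite covering of the complete graph K_n, i.e. each H_i is a bipartite graph with vertex set contained in V(K_n) and every edge of K_n belongs to E(H_i) for some i ∈ [m]. Then the capacity cap(H) = Σ_{i=1}^m |V(H_i)| satisfies cap(H) ≥ n·log₂ n. -/
open Finset

lemma card_forced (m : ℕ) (D : Finset (Fin m)) (f : Fin m → Bool) :
    (Finset.univ.filter (fun σ : Fin m → Bool => ∀ i ∈ D, σ i = f i)).card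
      = 2 ^ (m - D.card) := by
  rw [← Fintype.card_subtype]
  have e : {σ : Fin m → Bool // ∀ i ∈ D, σ i = f i} ≃ ({ i : Fin m // i ∉ D} → Bool) :=
    { toFun := fun σ j => σ.1 j.1
      invFun := fun g => ⟨fun i => if h : i ∈ D then f i else g ⟨i, h⟩,
        fun i hi => dif_pos hi⟩
      left_inv := fun σ => Subtype.ext (funext fun i => by
        by_cases h : i ∈ D
        · simp [h, σ.2 i h]
        · simp [h])
      right_inv := fun g => funext fun j => by simp [j.2] }
  rw [Fintype.card_congr e]
  have hc : Fintype.card {i : Fin m // i ∉ D} = m - D.card := by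
    simp [Fintype.card_subtype, Finset.filter_not, Finset.card_sdiff_of_subset (Finset.subset_univ D)]
  simp [Fintype.card_fun, hc]




/- STATEMENT 0 (Hansel's lemma).
A bipartite covering of `K_n` is represented by a finite family of pairs of disjoint
vertex sets `(A i, B i)` (the bipartition classes of the bipartite graph `H i`;
`V(H i) = A i ∪ B i`), such that every edge `{x, y}` of `K_n` lies in some `H i`,
i.e. crosses some pair `(A i, B i)`.  The capacity is `∑ i, |A i ∪ B i|`. -/
theorem hansel_lemma (n m : ℕ) (hn : 1 ≤ n)
    (A B : Fin m → Finset (Fin n))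
    (hdisj : ∀ i, Disjoint (A i) (B i))
    (hcover : ∀ x y : Fin n, x ≠ y →
      ∃ i, (x ∈ A i ∧ y ∈ B i) ∨ (x ∈ B i ∧ y ∈ A i)) :
    (n : ℝ) * Real.logb 2 n ≤ ∑ i, ((A i ∪ B i).card : ℝ) := by
  classical
  set d : Fin n → ℕ := fun x => (univ.filter (fun i => x ∈ A i ∪ B i)).card with hd
  -- Step 1: capacity = ∑ d x
  have step1 : ∑ i, ((A i ∪ B i).card : ℕ) = ∑ x, d x := by
    have h1 : ∀ i, (A i ∪ B i).card = ∑ x : Fin n, if x ∈ A i ∪ B i then 1 else 0 := by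
      intro i
      rw [← Finset.card_filter]
      congr 1
      ext x; simp
    simp only [h1, hd, Finset.card_filter]
    exact Finset.sum_comm
  -- survival predicate
  set surv : (Fin m → Bool) → Fin n → Prop :=
    fun σ x => ∀ i ∈ univ.filter (fun i => x ∈ A i ∪ B i), σ i = decide (x ∈ A i) with hs
  -- Step 2 : ∑ x, 2^(m - d x) ≤ 2^m
  have hcount : ∀ x, (univ.filter (fun σ => surv σ x)).card = 2 ^ (m - d x) := by
    intro x; exact card_forced m _ _
  have hone : ∀ σ : Fin m → Bool, (univ.filter (fun x => surv σ x)).card ≤ 1 := by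
    intro σ
    refine Finset.card_le_one.2 ?_
    intro x hx y hy
    by_contra hxy
    obtain ⟨i, hi⟩ := hcover x y hxy
    simp only [Finset.mem_filter, hs] at hx hy
    rcases hi with ⟨hxa, hyb⟩ | ⟨hxb, hya⟩
    · have h1 := hx.2 i (by simp [Finset.mem_union, hxa])
      have h2 := hy.2 i (by simp [Finset.mem_union, hyb])
      have : y ∉ A i := fun h => Finset.disjoint_left.1 (hdisj i) h hyb
      rw [h2] at h1; simp [hxa, this] at h1
    · have h1 := hx.2 i (by simp [Finset.mem_union, hxb])
      have h2 := hy.2 i (by simp [Finset.mem_union, hya])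
      have : x ∉ A i := fun h => Finset.disjoint_left.1 (hdisj i) h hxb
      rw [h1] at h2; simp [hya, this] at h2
  have step2 : ∑ x : Fin n, 2 ^ (m - d x) ≤ 2 ^ m := by
    calc ∑ x : Fin n, 2 ^ (m - d x)
        = ∑ x : Fin n, (univ.filter (fun σ => surv σ x)).card := by
          simp only [hcount]
      _ = ∑ σ : Fin m → Bool, (univ.filter (fun x => surv σ x)).card := by
          simp only [Finset.card_filter]
          exact Finset.sum_comm
      _ ≤ ∑ σ : Fin m → Bool, 1 := Finset.sum_le_sum fun σ _ => hone σ
      _ = 2 ^ m := by simp [Finset.card_univ]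
  -- Step 3 : real version ∑ (1/2)^(d x) ≤ 1
  have hdm : ∀ x, d x ≤ m := fun x => (Finset.card_filter_le _ _).trans (by simp)
  have step3 : ∑ x : Fin n, ((2:ℝ)⁻¹) ^ (d x) ≤ 1 := by
    have h2m : (0:ℝ) < 2 ^ m := by positivity
    calc ∑ x : Fin n, ((2:ℝ)⁻¹) ^ (d x)
          = (∑ x : Fin n, (2:ℝ) ^ (m - d x)) / 2 ^ m := by
            rw [Finset.sum_div]
            refine Finset.sum_congr rfl fun x _ => ?_
            rw [pow_sub₀ (2:ℝ) (by norm_num) (hdm x), inv_pow]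
            field_simp
        _ ≤ 1 := by
            rw [div_le_one h2m]
            calc (∑ x : Fin n, (2:ℝ) ^ (m - d x))
                = ((∑ x : Fin n, 2 ^ (m - d x) : ℕ) : ℝ) := by push_cast; ring
              _ ≤ ((2 ^ m : ℕ) : ℝ) := by exact_mod_cast step2
              _ = 2 ^ m := by push_cast; ring
  -- Step 4 : AM-GM
  have hn' : (0:ℝ) < n := by exact_mod_cast hn
  have amgm := Real.geom_mean_le_arith_mean_weighted univ (fun _ : Fin n => 1 / n)
    (fun x => ((2:ℝ)⁻¹) ^ (d x))
    (fun _ _ => by positivity)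
    (by rw [Finset.sum_const]; simp [Finset.card_univ]; field_simp)
    (fun x _ => by positivity)
  have hprod : ∏ x : Fin n, (((2:ℝ)⁻¹) ^ (d x)) ^ ((1:ℝ)/n)
      = (2:ℝ) ^ (-(((∑ x, d x : ℕ):ℝ))/n) := by
    have h1 : ∀ x : Fin n, (((2:ℝ)⁻¹) ^ (d x)) ^ ((1:ℝ)/n)
        = ((2:ℝ)⁻¹) ^ ((d x : ℝ) * ((1:ℝ)/n)) := by
      intro x
      rw [← Real.rpow_natCast ((2:ℝ)⁻¹) (d x), ← Real.rpow_mul (by norm_num)]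
    rw [Finset.prod_congr rfl (fun x _ => h1 x),
      ← Real.rpow_sum_of_pos (by norm_num : (0:ℝ) < 2⁻¹)]
    rw [Real.inv_rpow (by norm_num), ← Real.rpow_neg (by norm_num)]
    congr 1
    push_cast
    rw [← Finset.sum_mul]
    ring
  have key : (2:ℝ) ^ (-((∑ x, d x : ℕ) : ℝ) / n) ≤ 1 / n := by
    calc (2:ℝ) ^ (-((∑ x, d x : ℕ) : ℝ) / n)
        = ∏ x : Fin n, (((2:ℝ)⁻¹) ^ (d x)) ^ ((1:ℝ) / n) := hprod.symm
      _ ≤ ∑ x : Fin n, (1/(n:ℝ)) * ((2:ℝ)⁻¹) ^ (d x) := by simpa using amgm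
      _ = (1/(n:ℝ)) * ∑ x : Fin n, ((2:ℝ)⁻¹) ^ (d x) := by rw [Finset.mul_sum]
      _ ≤ (1/(n:ℝ)) * 1 := mul_le_mul_of_nonneg_left step3 (by positivity)
      _ = 1 / n := by ring
  have hlog : -(((∑ x, d x : ℕ):ℝ)) / n ≤ -Real.logb 2 n := by
    have h2 := Real.logb_le_logb_of_le (one_lt_two)
      (Real.rpow_pos_of_pos two_pos _) key
    rwa [Real.logb_rpow two_pos (by norm_num), one_div, Real.logb_inv] at h2
  have hcast : ((∑ x, d x : ℕ) : ℝ) = ∑ i, ((A i ∪ B i).card : ℝ) := by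
    rw [← step1]; push_cast; ring
  rw [← hcast]
  have h3 : Real.logb 2 n ≤ ((∑ x, d x : ℕ):ℝ) / n := by
    rw [neg_div] at hlog; linarith
  calc (n:ℝ) * Real.logb 2 n ≤ (n:ℝ) * (((∑ x, d x : ℕ):ℝ) / n) :=
        mul_le_mul_of_nonneg_left h3 hn'.le
    _ = ((∑ x, d x : ℕ):ℝ) := by field_simp
end

section
/- Let G be an n-vertex simple graph and let H = {H_1, …, H_m} be a bipartite covering of G. Then cap(H) ≥ Σ_{v ∈ V(G)} log₂(n / (n − d(v))) ≥ n·log₂(n² / (n² − 2e(G))), where d(v) is the degree of v in G and e(G) is the number of edges of G. -/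
open Finset Real

lemma jensen_log {n : ℕ} (hn : 0 < n) (z : Fin n → ℝ) (hz : ∀ v, 0 < z v) {c : ℝ}
    (hsum : ∑ v, z v ≤ c) :
    ∑ v, Real.log (z v) ≤ n * Real.log (c / n) := by
  have hn' : (0:ℝ) < n := Nat.cast_pos.2 hn
  have h1 : ∑ v : Fin n, (n:ℝ)⁻¹ • Real.log (z v)
      ≤ Real.log (∑ v : Fin n, (n:ℝ)⁻¹ • z v) := by
    apply (strictConcaveOn_log_Ioi.concaveOn).le_map_sum
      (fun _ _ => by positivity)
      (by simp [Finset.sum_const, Finset.card_univ]; field_simp)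
      (fun v _ => Set.mem_Ioi.2 (hz v))
  have h2 : Real.log (∑ v : Fin n, (n:ℝ)⁻¹ • z v) ≤ Real.log (c / n) := by
    apply Real.log_le_log
    · exact Finset.sum_pos (fun v _ => smul_pos (inv_pos.2 hn') (hz v))
        ⟨⟨0, hn⟩, Finset.mem_univ _⟩
    · rw [← Finset.smul_sum, smul_eq_mul, div_eq_inv_mul]
      exact mul_le_mul_of_nonneg_left hsum (by positivity)
  have h3 := le_trans h1 h2
  rw [← Finset.smul_sum, smul_eq_mul] at h3
  calc ∑ v, Real.log (z v) = n * ((n:ℝ)⁻¹ * ∑ v, Real.log (z v)) := by field_simp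
    _ ≤ n * Real.log (c / n) := mul_le_mul_of_nonneg_left h3 (le_of_lt hn')

lemma count_funcs {m : ℕ} (P : Fin m → Prop) [DecidablePred P] (b : Fin m → Bool) :
    (univ.filter (fun ε : Fin m → Bool => ∀ i, P i → ε i = b i)).card
      = 2 ^ (m - (univ.filter P).card) := by
  have hset : univ.filter (fun ε : Fin m → Bool => ∀ i, P i → ε i = b i)
      = Fintype.piFinset (fun i => if P i then {b i} else univ) := by
    ext ε
    simp only [Finset.mem_filter, Finset.mem_univ, true_and, Fintype.mem_piFinset]
    constructor
    · intro h i
      by_cases hP : P i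
      · simp [hP, h i hP]
      · simp [hP]
    · intro h i hP
      have := h i
      simpa [hP] using this
  rw [hset, Fintype.card_piFinset]
  have : ∀ i, (if P i then ({b i} : Finset Bool) else univ).card = if P i then 1 else 2 := by
    intro i; by_cases hP : P i <;> simp [hP]
  simp only [this]
  rw [Finset.prod_ite, Finset.prod_const, Finset.prod_const]
  simp only [one_pow, one_mul]
  congr 1
  have := Finset.card_filter_add_card_filter_not (s := (univ : Finset (Fin m))) (p := P)
  simp only [Finset.card_univ, Fintype.card_fin] at this
  omega

/- STATEMENT 1 (Katona–Szemerédi).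
`G` is an `n`-vertex simple graph; a bipartite covering is a finite family of bipartite
graphs `H i` given by the pairs of disjoint bipartition classes `(A i, B i)` (so
`V(H i) = A i ∪ B i`) such that every edge of `G` lies in some `H i`, i.e. crosses some
pair `(A i, B i)`.  The capacity `∑ i, |A i ∪ B i|` is at least
`∑_{v} log₂(n/(n − d(v)))`, which in turn is at least `n · log₂(n²/(n² − 2e(G)))`. -/
theorem katona_szemeredi (n m : ℕ) (G : SimpleGraph (Fin n)) [DecidableRel G.Adj]
    (A B : Fin m → Finset (Fin n))
    (hdisj : ∀ i, Disjoint (A i) (B i))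
    (hcover : ∀ x y : Fin n, G.Adj x y →
      ∃ i, (x ∈ A i ∧ y ∈ B i) ∨ (x ∈ B i ∧ y ∈ A i)) :
    (∑ v : Fin n, Real.logb 2 ((n : ℝ) / ((n : ℝ) - (G.degree v : ℝ)))
        ≤ ∑ i, ((A i ∪ B i).card : ℝ)) ∧
    ((n : ℝ) * Real.logb 2 ((n : ℝ) ^ 2 / ((n : ℝ) ^ 2 - 2 * (G.edgeFinset.card : ℝ)))
        ≤ ∑ v : Fin n, Real.logb 2 ((n : ℝ) / ((n : ℝ) - (G.degree v : ℝ)))) := by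
  rcases Nat.eq_zero_or_pos n with hn0 | hn
  · subst hn0
    constructor
    · simp only [Finset.univ_eq_empty, Finset.sum_empty]
      positivity
    · simp
  have hn' : (0:ℝ) < n := Nat.cast_pos.2 hn
  have hdeg : ∀ v : Fin n, (G.degree v : ℝ) < n := by
    intro v
    have := G.degree_lt_card_verts v
    simp only [Fintype.card_fin] at this
    exact_mod_cast this
  have hwpos : ∀ v : Fin n, (0:ℝ) < (n:ℝ) - (G.degree v : ℝ) := by
    intro v; linarith [hdeg v]
  set s : Fin n → ℕ := fun v => (univ.filter (fun i => v ∈ A i ∨ v ∈ B i)).card with hs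
  have hsm : ∀ v, s v ≤ m := by
    intro v
    calc s v ≤ (univ : Finset (Fin m)).card := Finset.card_filter_le _ _
      _ = m := by simp
  -- capacity identity
  have hcap : ∑ i, ((A i ∪ B i).card : ℝ) = ∑ v, (s v : ℝ) := by
    have key : ∑ i, (A i ∪ B i).card = ∑ v, s v := by
      have h1 : ∀ i : Fin m, (A i ∪ B i).card
          = ∑ v : Fin n, if v ∈ A i ∨ v ∈ B i then 1 else 0 := by
        intro i
        have h : A i ∪ B i = univ.filter (fun v => v ∈ A i ∨ v ∈ B i) := by
          ext v; simp
        rw [h, Finset.card_filter]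
      have h2 : ∀ v, s v = ∑ i : Fin m, if v ∈ A i ∨ v ∈ B i then 1 else 0 := by
        intro v; rw [hs]; exact Finset.card_filter _ _
      simp only [h1, h2]
      exact Finset.sum_comm
    exact_mod_cast key
  -- alive sets
  set Al : (Fin m → Bool) → Finset (Fin n) := fun ε =>
    univ.filter (fun v => ∀ i, (v ∈ A i → ε i = false) ∧ (v ∈ B i → ε i = true)) with hAl
  -- Step B: per-ε independent-set bound
  have stepB : ∀ ε : Fin m → Bool,
      ∑ v ∈ Al ε, (n:ℝ) / ((n:ℝ) - (G.degree v : ℝ)) ≤ n := by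
    intro ε
    rcases (Al ε).eq_empty_or_nonempty with he | hne
    · rw [he]; simp [hn'.le]
    have hcardpos : 0 < (Al ε).card := Finset.card_pos.2 hne
    have hcardpos' : (0:ℝ) < ((Al ε).card : ℝ) := Nat.cast_pos.2 hcardpos
    have hbound : ∀ v ∈ Al ε, G.degree v + (Al ε).card ≤ n := by
      intro v hv
      have hdisjN : Disjoint (G.neighborFinset v) (Al ε) := by
        rw [Finset.disjoint_left]
        intro u hu hu'
        rw [SimpleGraph.mem_neighborFinset] at hu
        obtain ⟨i, hi⟩ := hcover v u hu
        simp only [hAl, Finset.mem_filter, Finset.mem_univ, true_and] at hv hu'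
        rcases hi with ⟨hvA, huB⟩ | ⟨hvB, huA⟩
        · have h1 := (hv i).1 hvA
          have h2 := (hu' i).2 huB
          simp [h1] at h2
        · have h1 := (hv i).2 hvB
          have h2 := (hu' i).1 huA
          simp [h1] at h2
      calc G.degree v + (Al ε).card
          = (G.neighborFinset v ∪ Al ε).card := by
            rw [Finset.card_union_of_disjoint hdisjN, SimpleGraph.card_neighborFinset_eq_degree]
        _ ≤ (univ : Finset (Fin n)).card := Finset.card_le_univ _
        _ = n := by simp
    calc ∑ v ∈ Al ε, (n:ℝ) / ((n:ℝ) - (G.degree v : ℝ))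
        ≤ ∑ v ∈ Al ε, (n:ℝ) / ((Al ε).card : ℝ) := by
          apply Finset.sum_le_sum
          intro v hv
          apply div_le_div_of_nonneg_left hn'.le hcardpos'
          have := hbound v hv
          have : (G.degree v : ℝ) + ((Al ε).card : ℝ) ≤ n := by exact_mod_cast this
          linarith
      _ = ((Al ε).card : ℝ) * ((n:ℝ) / ((Al ε).card : ℝ)) := by
          rw [Finset.sum_const, nsmul_eq_mul]
      _ = n := by field_simp
  -- Step C: counting
  have stepC : ∀ v : Fin n,
      (univ.filter (fun ε : Fin m → Bool => v ∈ Al ε)).card = 2 ^ (m - s v) := by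
    intro v
    have hfe : (univ.filter (fun ε : Fin m → Bool => v ∈ Al ε))
        = univ.filter (fun ε : Fin m → Bool =>
            ∀ i, (v ∈ A i ∨ v ∈ B i) → ε i = decide (v ∈ B i)) := by
      apply Finset.filter_congr
      intro ε _
      simp only [hAl, Finset.mem_filter, Finset.mem_univ, true_and]
      constructor
      · intro h i hP
        rcases hP with hA | hB
        · have hnB : v ∉ B i := Finset.disjoint_left.mp (hdisj i) hA
          simp [hnB, (h i).1 hA]
        · simp [hB, (h i).2 hB]
      · intro h i
        constructor
        · intro hA
          have hnB : v ∉ B i := Finset.disjoint_left.mp (hdisj i) hA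
          have := h i (Or.inl hA)
          simpa [hnB] using this
        · intro hB
          have := h i (Or.inr hB)
          simpa [hB] using this
    rw [hfe, count_funcs]
  -- Step D: double counting
  have stepD : ∑ v : Fin n, ((n:ℝ) / ((n:ℝ) - (G.degree v : ℝ))) * (2:ℝ) ^ (m - s v)
      ≤ (2:ℝ) ^ m * n := by
    have hswap : ∑ ε : Fin m → Bool, ∑ v ∈ Al ε, (n:ℝ) / ((n:ℝ) - (G.degree v : ℝ))
        = ∑ v : Fin n, ((n:ℝ) / ((n:ℝ) - (G.degree v : ℝ))) * (2:ℝ) ^ (m - s v) := by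
      have h1 : ∀ ε : Fin m → Bool, ∑ v ∈ Al ε, (n:ℝ) / ((n:ℝ) - (G.degree v : ℝ))
          = ∑ v : Fin n, if v ∈ Al ε then (n:ℝ) / ((n:ℝ) - (G.degree v : ℝ)) else 0 := by
        intro ε; rw [Finset.sum_ite_mem, Finset.univ_inter]
      simp only [h1]
      rw [Finset.sum_comm]
      apply Finset.sum_congr rfl
      intro v _
      rw [← Finset.sum_filter, Finset.sum_const, stepC v, nsmul_eq_mul]
      push_cast
      ring
    rw [← hswap]
    calc ∑ ε : Fin m → Bool, ∑ v ∈ Al ε, (n:ℝ) / ((n:ℝ) - (G.degree v : ℝ))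
        ≤ ∑ _ε : Fin m → Bool, (n:ℝ) := Finset.sum_le_sum (fun ε _ => stepB ε)
      _ = (2:ℝ) ^ m * n := by
          rw [Finset.sum_const, nsmul_eq_mul, Finset.card_univ, Fintype.card_fun]
          push_cast
          simp
  -- Step E: Jensen for the first inequality
  have hlog2 : (0:ℝ) < Real.log 2 := Real.log_pos (by norm_num)
  have first : ∑ v : Fin n, Real.logb 2 ((n : ℝ) / ((n : ℝ) - (G.degree v : ℝ)))
      ≤ ∑ i, ((A i ∪ B i).card : ℝ) := by
    have hz : ∀ v : Fin n,
        (0:ℝ) < ((n:ℝ) / ((n:ℝ) - (G.degree v : ℝ))) * (2:ℝ) ^ (m - s v) := by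
      intro v
      have := hwpos v
      positivity
    have hJ := jensen_log hn
      (fun v => ((n:ℝ) / ((n:ℝ) - (G.degree v : ℝ))) * (2:ℝ) ^ (m - s v)) hz stepD
    have hc : ((2:ℝ) ^ m * n) / n = (2:ℝ) ^ m := by field_simp
    rw [hc, Real.log_pow] at hJ
    have hexp : ∀ v : Fin n,
        Real.log (((n:ℝ) / ((n:ℝ) - (G.degree v : ℝ))) * (2:ℝ) ^ (m - s v))
          = Real.log ((n:ℝ) / ((n:ℝ) - (G.degree v : ℝ)))
              + ((m:ℝ) - (s v : ℝ)) * Real.log 2 := by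
      intro v
      rw [Real.log_mul (ne_of_gt (div_pos hn' (hwpos v))) (by positivity), Real.log_pow]
      have : ((m - s v : ℕ) : ℝ) = (m:ℝ) - (s v : ℝ) := by
        have := hsm v; push_cast [Nat.cast_sub this]; ring
      rw [this]
    simp only [hexp] at hJ
    rw [Finset.sum_add_distrib] at hJ
    have hsum2 : ∑ v : Fin n, ((m:ℝ) - (s v : ℝ)) * Real.log 2
        = ((n:ℝ) * m - ∑ v, (s v : ℝ)) * Real.log 2 := by
      rw [← Finset.sum_mul]
      congr 1
      rw [Finset.sum_sub_distrib, Finset.sum_const, nsmul_eq_mul, Finset.card_univ]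
      simp
    rw [hsum2] at hJ
    have hmain : ∑ v : Fin n, Real.log ((n:ℝ) / ((n:ℝ) - (G.degree v : ℝ)))
        ≤ (∑ v, (s v : ℝ)) * Real.log 2 := by nlinarith [hJ]
    rw [hcap]
    have : ∑ v : Fin n, Real.logb 2 ((n : ℝ) / ((n : ℝ) - (G.degree v : ℝ)))
        = (∑ v : Fin n, Real.log ((n:ℝ) / ((n:ℝ) - (G.degree v : ℝ)))) / Real.log 2 := by
      rw [Finset.sum_div]
      apply Finset.sum_congr rfl
      intro v _
      rw [Real.logb]
    rw [this, div_le_iff₀ hlog2]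
    exact hmain
  refine ⟨first, ?_⟩
  -- Second inequality: Jensen directly
  have hz2 : ∀ v : Fin n, (0:ℝ) < (n:ℝ) - (G.degree v : ℝ) := hwpos
  have hsum2 : ∑ v : Fin n, ((n:ℝ) - (G.degree v : ℝ))
      = (n:ℝ) ^ 2 - 2 * (G.edgeFinset.card : ℝ) := by
    have hd := G.sum_degrees_eq_twice_card_edges
    rw [Finset.sum_sub_distrib, Finset.sum_const, nsmul_eq_mul, Finset.card_univ]
    have : ∑ v : Fin n, (G.degree v : ℝ) = 2 * (G.edgeFinset.card : ℝ) := by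
      exact_mod_cast congrArg (Nat.cast : ℕ → ℝ) hd
    rw [this]
    simp [sq]
  set c : ℝ := (n:ℝ) ^ 2 - 2 * (G.edgeFinset.card : ℝ) with hc
  have hcpos : (0:ℝ) < c := by
    rw [← hsum2]
    exact Finset.sum_pos (fun v _ => hwpos v) ⟨⟨0, hn⟩, Finset.mem_univ _⟩
  have hJ2 := jensen_log hn (fun v => (n:ℝ) - (G.degree v : ℝ)) hz2 (le_of_eq hsum2)
  -- translate
  have hlogb : ∀ v : Fin n, Real.logb 2 ((n : ℝ) / ((n : ℝ) - (G.degree v : ℝ)))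
      = (Real.log (n:ℝ) - Real.log ((n:ℝ) - (G.degree v : ℝ))) / Real.log 2 := by
    intro v
    rw [Real.logb, Real.log_div (ne_of_gt hn') (ne_of_gt (hwpos v))]
  have hR : (n : ℝ) * Real.logb 2 ((n : ℝ) ^ 2 / c)
      = (n:ℝ) * ((2 * Real.log (n:ℝ) - Real.log c) / Real.log 2) := by
    rw [Real.logb, Real.log_div (by positivity) (ne_of_gt hcpos), Real.log_pow]
    push_cast
    ring
  rw [hR]
  simp only [hlogb]
  rw [← mul_div_assoc, ← Finset.sum_div]
  rw [div_le_div_iff₀ hlog2 hlog2]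
  have hsplit : ∑ v : Fin n, (Real.log (n:ℝ) - Real.log ((n:ℝ) - (G.degree v : ℝ)))
      = (n:ℝ) * Real.log (n:ℝ) - ∑ v : Fin n, Real.log ((n:ℝ) - (G.degree v : ℝ)) := by
    rw [Finset.sum_sub_distrib, Finset.sum_const, nsmul_eq_mul, Finset.card_univ]
    simp
  rw [Real.log_div (ne_of_gt hcpos) (ne_of_gt hn')] at hJ2
  rw [hsplit]
  nlinarith [hJ2, hlog2]
end

section
/- Let n, λ ∈ ℕ and let H be a bipartite covering of the complete multigraph K_n^λ (every pair of distinct vertices joined by an edge of multiplicity λ). Then cap(H) ≥ max{ 2λ(n−1), n·( log₂ n + ⌊(λ−1)/2⌋·log₂((log₂ n)/λ) − λ − 1 ) }. -/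
/-!
Let `d(v)` be the number of graphs containing the vertex `v`, so that the capacity is
`∑ v, d(v)`, and `d(v) ≥ λ` as soon as `n ≥ 2`.

Counting ordered pairs of distinct vertices gives `λ n (n - 1) ≤ ∑ i, 2 |A i| |B i|`, and
`4 |A i| |B i| ≤ |A i ∪ B i| ^ 2 ≤ n |A i ∪ B i|`; this is the bound `2 λ (n - 1)`.

For the second bound, choose one side of every graph uniformly at random and let
`k = ⌊(λ - 1) / 2⌋`. Call `v` a survivor if exactly `k` of the chosen sides contain `v`.
Distinct vertices `x, y` are separated by at least `λ > 2k` graphs, each of which puts `x` or `y`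
on its chosen side, so there is at most one survivor; hence `∑ v, C(d(v), k) / 2 ^ d(v) ≤ 1`.
With `d ^ k ≤ k ^ k C(d, k)` this gives `∑ v, d(v) ^ k / 2 ^ d(v) ≤ k ^ k`. The function
`x ↦ x ^ k / 2 ^ x` is convex on `[2k + 1, ∞)`, so Jensen's inequality bounds the average degree
`D` by `D ≥ log n + k (log D - log k)`, and this forces `D ≥ log n + k log (log n / λ)`.
-/

open Finset Real
open scoped symmDiff

section BipartiteCovering

variable {α ι : Type*} [DecidableEq α] [Fintype ι]

def IsBipartiteCovering (lam : ℕ) (A B : ι → Finset α) : Prop :=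
  ∀ x y : α, x ≠ y → lam ≤ #{i | (x ∈ A i ∧ y ∈ B i) ∨ (x ∈ B i ∧ y ∈ A i)}

def coverDegree (A B : ι → Finset α) (v : α) : ℕ := #{i | v ∈ A i ∪ B i}

/-- `T` is the set of indices `i` at which the side `A i` (rather than `B i`) is chosen. -/
def sideHits [DecidableEq ι] (A B : ι → Finset α) (T : Finset ι) (v : α) : Finset ι :=
  {i | v ∈ if i ∈ T then A i else B i}

variable {lam k : ℕ} {A B : ι → Finset α}

theorem sum_card_union_eq_sum_coverDegree [Fintype α] (A B : ι → Finset α) :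
    ∑ i, #(A i ∪ B i) = ∑ v, coverDegree A B v := by
  have := sum_card_bipartiteAbove_eq_sum_card_bipartiteBelow (s := univ) (t := univ)
    (fun i v => v ∈ A i ∪ B i)
  simpa only [bipartiteAbove, bipartiteBelow, filter_univ_mem, coverDegree] using this

theorem IsBipartiteCovering.le_coverDegree [Nontrivial α] (h : IsBipartiteCovering lam A B)
    (v : α) : lam ≤ coverDegree A B v := by
  obtain ⟨y, hy⟩ := exists_ne v
  refine (h v y hy.symm).trans (card_le_card fun i => ?_)
  simp only [mem_filter, mem_univ, true_and, mem_union]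
  tauto

theorem IsBipartiteCovering.mul_card_mul_card_sub_one_le [Fintype α]
    (h : IsBipartiteCovering lam A B) :
    lam * (Fintype.card α * (Fintype.card α - 1)) ≤ ∑ i, 2 * (#(A i) * #(B i)) :=
  calc lam * (Fintype.card α * (Fintype.card α - 1))
      = #(univ : Finset α).offDiag • lam := by
        rw [offDiag_card, card_univ, smul_eq_mul, Nat.mul_sub_one, mul_comm]
    _ ≤ ∑ p ∈ (univ : Finset α).offDiag,
          #{i | (p.1 ∈ A i ∧ p.2 ∈ B i) ∨ (p.1 ∈ B i ∧ p.2 ∈ A i)} :=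
        card_nsmul_le_sum _ _ _ fun p hp => h p.1 p.2 (mem_offDiag.1 hp).2.2
    _ = ∑ i, #{p ∈ (univ : Finset α).offDiag |
          (p.1 ∈ A i ∧ p.2 ∈ B i) ∨ (p.1 ∈ B i ∧ p.2 ∈ A i)} := by
        simp only [card_filter]
        exact sum_comm
    _ ≤ ∑ i, #(A i ×ˢ B i ∪ B i ×ˢ A i) := by
        gcongr with i
        intro p
        simp
    _ ≤ ∑ i, 2 * (#(A i) * #(B i)) := by
        gcongr with i
        refine (card_union_le _ _).trans_eq ?_
        rw [card_product, card_product]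
        ring

theorem IsBipartiteCovering.two_mul_mul_card_sub_one_le [Fintype α]
    (hdisj : ∀ i, Disjoint (A i) (B i)) (h : IsBipartiteCovering lam A B) :
    2 * lam * (Fintype.card α - 1) ≤ ∑ i, #(A i ∪ B i) := by
  set n := Fintype.card α
  obtain hn | hn := Nat.eq_zero_or_pos n
  · simp [hn]
  refine Nat.le_of_mul_le_mul_left ?_ hn
  calc n * (2 * lam * (n - 1)) = 2 * (lam * (n * (n - 1))) := by ring
    _ ≤ ∑ i, 4 * #(A i) * #(B i) := by
        refine (Nat.mul_le_mul_left 2 h.mul_card_mul_card_sub_one_le).trans_eq ?_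
        rw [mul_sum]
        exact sum_congr rfl fun i _ => by ring
    _ ≤ ∑ i, #(A i ∪ B i) ^ 2 := by
        gcongr with i
        rw [card_union_of_disjoint (hdisj i)]
        exact four_mul_le_sq_add _ _
    _ ≤ ∑ i, n * #(A i ∪ B i) := by
        gcongr with i
        rw [sq]
        exact Nat.mul_le_mul_right _ (card_le_univ _)
    _ = n * ∑ i, #(A i ∪ B i) := (mul_sum ..).symm

theorem IsBipartiteCovering.le_card_sideHits_add [DecidableEq ι]
    (h : IsBipartiteCovering lam A B) (T : Finset ι) {x y : α} (hxy : x ≠ y) :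
    lam ≤ #(sideHits A B T x) + #(sideHits A B T y) := by
  refine (h x y hxy).trans ((card_le_card fun i => ?_).trans (card_union_le _ _))
  by_cases hi : i ∈ T <;> simp [sideHits, hi] <;> tauto

theorem IsBipartiteCovering.card_filter_card_sideHits_eq_le_one [Fintype α] [DecidableEq ι]
    (h : IsBipartiteCovering lam A B) (hk : 2 * k < lam) (T : Finset ι) :
    #{v | #(sideHits A B T v) = k} ≤ 1 := by
  refine card_le_one.2 fun x hx y hy => by_contra fun hxy => ?_
  have := h.le_card_sideHits_add T hxy
  simp only [mem_filter] at hx hy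
  omega

theorem sideHits_eq_symmDiff_inter [DecidableEq ι] (hdisj : ∀ i, Disjoint (A i) (B i))
    (T : Finset ι) (v : α) :
    sideHits A B T v
      = (T ∆ ({i | v ∈ B i} : Finset ι)) ∩ ({i | v ∈ A i ∪ B i} : Finset ι) := by
  ext i
  have : v ∈ A i → v ∉ B i := fun hA => disjoint_left.1 (hdisj i) hA
  by_cases hi : i ∈ T <;> simp [sideHits, mem_symmDiff, hi] <;> tauto

theorem choose_mul_two_pow_le_card_filter_card_inter_eq [DecidableEq ι] (D : Finset ι) (k : ℕ) :
    (#D).choose k * 2 ^ (Fintype.card ι - #D) ≤ #{T : Finset ι | #(T ∩ D) = k} := by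
  have hsplit : ∀ p ∈ D.powersetCard k ×ˢ Dᶜ.powerset,
      (p.1 ∪ p.2) ∩ D = p.1 ∧ (p.1 ∪ p.2) \ D = p.2 := by
    rintro ⟨S, U⟩ hp
    simp only [mem_product, mem_powersetCard, mem_powerset, subset_compl_iff_disjoint_right] at hp
    obtain ⟨⟨hSD, -⟩, hUD⟩ := hp
    simp [union_inter_distrib_right, inter_eq_left.2 hSD, disjoint_iff_inter_eq_empty.1 hUD,
      union_sdiff_distrib, sdiff_eq_empty_iff_subset.2 hSD, hUD.sdiff_eq_left]
  rw [← card_powersetCard, ← card_compl, ← card_powerset, ← card_product]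
  refine card_le_card_of_injOn (fun p => p.1 ∪ p.2) (fun p hp => ?_) (fun p hp q hq hpq => ?_)
  · have hp' := hp
    simp only [coe_product, Set.mem_prod, mem_coe, mem_powersetCard] at hp'
    simp [(hsplit p hp).1, hp'.1.2]
  · obtain ⟨hp1, hp2⟩ := hsplit p hp
    obtain ⟨hq1, hq2⟩ := hsplit q hq
    simp only at hpq
    exact Prod.ext (hp1.symm.trans (hpq ▸ hq1)) (hp2.symm.trans (hpq ▸ hq2))

theorem choose_coverDegree_mul_two_pow_le [DecidableEq ι] (hdisj : ∀ i, Disjoint (A i) (B i))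
    (k : ℕ) (v : α) :
    (coverDegree A B v).choose k * 2 ^ (Fintype.card ι - coverDegree A B v)
      ≤ #{T : Finset ι | #(sideHits A B T v) = k} := by
  set E : Finset ι := {i | v ∈ B i}
  have hbij : #{T : Finset ι | #(T ∩ ({i | v ∈ A i ∪ B i} : Finset ι)) = k}
      = #{T : Finset ι | #(sideHits A B T v) = k} := by
    refine card_nbij' (· ∆ E) (· ∆ E) (fun T hT => ?_) (fun T hT => ?_)
      (fun T _ => symmDiff_symmDiff_cancel_right E T)
      (fun T _ => symmDiff_symmDiff_cancel_right E T)
    · simpa [sideHits_eq_symmDiff_inter hdisj, E] using hT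
    · simpa [sideHits_eq_symmDiff_inter hdisj] using hT
  exact (choose_mul_two_pow_le_card_filter_card_inter_eq _ k).trans_eq hbij

theorem IsBipartiteCovering.sum_choose_mul_two_pow_le [Fintype α] [DecidableEq ι]
    (hdisj : ∀ i, Disjoint (A i) (B i)) (h : IsBipartiteCovering lam A B) (hk : 2 * k < lam) :
    ∑ v, (coverDegree A B v).choose k * 2 ^ (Fintype.card ι - coverDegree A B v)
      ≤ 2 ^ Fintype.card ι :=
  calc ∑ v, (coverDegree A B v).choose k * 2 ^ (Fintype.card ι - coverDegree A B v)
      ≤ ∑ v, #{T : Finset ι | #(sideHits A B T v) = k} :=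
        sum_le_sum fun v _ => choose_coverDegree_mul_two_pow_le hdisj k v
    _ = ∑ T : Finset ι, #{v | #(sideHits A B T v) = k} := by
        simp only [card_filter]
        exact sum_comm
    _ ≤ ∑ _T : Finset ι, 1 := sum_le_sum fun T _ => h.card_filter_card_sideHits_eq_le_one hk T
    _ = 2 ^ Fintype.card ι := by simp

theorem IsBipartiteCovering.sum_choose_div_two_pow_le_one [Fintype α] [DecidableEq ι]
    (hdisj : ∀ i, Disjoint (A i) (B i)) (h : IsBipartiteCovering lam A B) (hk : 2 * k < lam) :
    ∑ v, ((coverDegree A B v).choose k : ℝ) / 2 ^ coverDegree A B v ≤ 1 := by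
  have hle : ∀ v, coverDegree A B v ≤ Fintype.card ι := fun v => card_le_univ _
  have hsum :
      (∑ v, (coverDegree A B v).choose k * 2 ^ (Fintype.card ι - coverDegree A B v) : ℝ)
        ≤ 2 ^ Fintype.card ι := by exact_mod_cast h.sum_choose_mul_two_pow_le hdisj hk
  rw [← div_le_one (by positivity), sum_div] at hsum
  refine le_of_eq_of_le (sum_congr rfl fun v _ => ?_) hsum
  rw [pow_sub₀ _ two_ne_zero (hle v)]
  field_simp

end BipartiteCovering

theorem Nat.pow_le_pow_mul_choose {d k : ℕ} (h : k ≤ d) : d ^ k ≤ k ^ k * d.choose k := by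
  induction k generalizing d with
  | zero => simp
  | succ k ih =>
    obtain ⟨e, rfl⟩ : ∃ e, d = e + 1 := ⟨d - 1, by omega⟩
    have hke : k ≤ e := by omega
    have key : (e + 1) ^ k ≤ (k + 1) ^ k * e.choose k := by
      refine Nat.le_of_mul_le_mul_left ?_ (Nat.pow_self_pos (n := k))
      calc k ^ k * (e + 1) ^ k = (k * (e + 1)) ^ k := (mul_pow ..).symm
        _ ≤ ((k + 1) * e) ^ k := Nat.pow_le_pow_left (by nlinarith) k
        _ = (k + 1) ^ k * e ^ k := mul_pow ..
        _ ≤ (k + 1) ^ k * (k ^ k * e.choose k) := Nat.mul_le_mul_left _ (ih hke)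
        _ = k ^ k * ((k + 1) ^ k * e.choose k) := by ring
    calc (e + 1) ^ (k + 1) = (e + 1) ^ k * (e + 1) := pow_succ _ _
      _ ≤ (k + 1) ^ k * e.choose k * (e + 1) := Nat.mul_le_mul_right _ key
      _ = (k + 1) ^ (k + 1) * (e + 1).choose (k + 1) := by
        rw [mul_assoc, mul_comm (e.choose k), Nat.add_one_mul_choose_eq]; ring

theorem exp_mul_log_sub_log_two_mul_natCast (k : ℕ) {d : ℕ} (hd : 0 < d) :
    exp (k * log d - log 2 * d) = (d : ℝ) ^ k / 2 ^ d := by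
  rw [exp_sub, exp_nat_mul, mul_comm, exp_nat_mul, exp_log (by positivity), exp_log two_pos]

theorem hasDerivAt_exp_mul_log_sub_mul (k c : ℝ) {x : ℝ} (hx : x ≠ 0) :
    HasDerivAt (fun x => exp (k * log x - c * x))
      (exp (k * log x - c * x) * (k * x⁻¹ - c)) x := by
  have := ((hasDerivAt_log hx).const_mul k).sub ((hasDerivAt_id x).const_mul c)
  simpa using this.exp

theorem convexOn_exp_mul_log_sub_mul {k c a : ℝ} (ha : 0 < a) (hc : 0 ≤ c) (hka : k ≤ c * a)
    (hk : k ≤ (c * a - k) ^ 2) : ConvexOn ℝ (Set.Ici a) (fun x => exp (k * log x - c * x)) := by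
  have hpos : ∀ x ∈ interior (Set.Ici a), 0 < x := fun x hx => ha.trans (by simpa using hx)
  refine convexOn_of_hasDerivWithinAt2_nonneg (convex_Ici a)
    (f' := fun x => exp (k * log x - c * x) * (k * x⁻¹ - c))
    (f'' := fun x => exp (k * log x - c * x) * ((k * x⁻¹ - c) ^ 2 - k * (x ^ 2)⁻¹))
    (fun x hx => (hasDerivAt_exp_mul_log_sub_mul k c
      (ha.trans_le hx).ne').continuousAt.continuousWithinAt)
    (fun x hx => (hasDerivAt_exp_mul_log_sub_mul k c (hpos x hx).ne').hasDerivWithinAt)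
    (fun x hx => ?_) (fun x hx => ?_)
  · have hx := (hpos x hx).ne'
    have := (hasDerivAt_exp_mul_log_sub_mul k c hx).mul
      (((hasDerivAt_inv hx).const_mul k).sub_const c)
    exact (this.congr_deriv (by ring)).hasDerivWithinAt
  · have hxa : a < x := by simpa using hx
    have hx := hpos x hx
    have hquad : k ≤ (c * x - k) ^ 2 :=
      hk.trans (pow_le_pow_left₀ (by linarith) (by nlinarith) 2)
    have : (k * x⁻¹ - c) ^ 2 - k * (x ^ 2)⁻¹ = ((c * x - k) ^ 2 - k) / x ^ 2 := by
      field_simp; ring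
    rw [this]
    exact mul_nonneg (exp_pos _).le (div_nonneg (by linarith) (by positivity))

theorem convexOn_exp_mul_log_sub_log_two_mul (k : ℕ) :
    ConvexOn ℝ (Set.Ici (2 * k + 1 : ℝ)) (fun x => exp (k * log x - log 2 * x)) := by
  have := log_two_gt_d9
  have hk : (0 : ℝ) ≤ k := k.cast_nonneg
  have hlin : 0.386 * k + 0.693 ≤ log 2 * (2 * k + 1) - k := by nlinarith
  refine convexOn_exp_mul_log_sub_mul (by positivity) (log_pos one_lt_two).le (by linarith) ?_
  nlinarith [pow_le_pow_left₀ (by positivity) hlin 2, sq_nonneg ((k : ℝ) - 1.56)]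

theorem logb_card_add_mul_logb_sub_le_mean {α : Type*} [Fintype α] [Nonempty α] {k : ℕ}
    {x : α → ℝ} (hx : ∀ v, 2 * k + 1 ≤ x v)
    (hsum : ∑ v, exp (k * log (x v) - log 2 * x v) ≤ k ^ k) :
    logb 2 (Fintype.card α) + k * (logb 2 ((∑ v, x v) / Fintype.card α) - logb 2 k)
      ≤ (∑ v, x v) / Fintype.card α := by
  set n : ℝ := (Fintype.card α : ℝ)
  set X := (∑ v, x v) / n
  have hn : 0 < n := by simp [n, Fintype.card_pos]
  have hjensen := (convexOn_exp_mul_log_sub_log_two_mul k).map_sum_le (t := univ)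
    (w := fun _ => n⁻¹) (p := x) (fun _ _ => by positivity) (by simp [n, hn.ne'])
    (fun v _ => hx v)
  simp only [smul_eq_mul, ← mul_sum] at hjensen
  rw [inv_mul_eq_div, inv_mul_eq_div] at hjensen
  have hfX : exp (k * log X - log 2 * X) ≤ k ^ k / n := hjensen.trans (by gcongr)
  have hkk : (0 : ℝ) < (k : ℝ) ^ k := by exact_mod_cast Nat.pow_self_pos
  have hlog := log_le_log (exp_pos _) hfX
  rw [log_exp, log_div hkk.ne' hn.ne', log_pow] at hlog
  have hlog2 := log_pos one_lt_two
  simp only [logb]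
  field_simp
  linarith

theorem add_mul_logb_div_le_of_add_mul_logb_sub_le {L D lam k : ℝ} (hL : 0 < L) (hk : 0 ≤ k)
    (hklam : k ≤ lam) (hD : lam ≤ D) (h : L + k * (logb 2 D - logb 2 k) ≤ D) :
    L + k * logb 2 (L / lam) ≤ D := by
  obtain rfl | hk := hk.eq_or_lt
  · simpa using h
  have hlam := hk.trans_le hklam
  have hDpos := hlam.trans_le hD
  by_cases hcase : L / lam ≤ D / k
  · calc L + k * logb 2 (L / lam) ≤ L + k * logb 2 (D / k) := by
          gcongr
          exact one_lt_two
      _ = L + k * (logb 2 D - logb 2 k) := by rw [logb_div hDpos.ne' hk.ne']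
      _ ≤ D := h
  · -- otherwise `D < L k / lam ≤ L`, while `h` gives `L ≤ D` because `k ≤ D`
    rw [not_le, div_lt_div_iff₀ hk hlam] at hcase
    have hlogb : logb 2 k ≤ logb 2 D := logb_le_logb_of_le one_lt_two hk (hklam.trans hD)
    nlinarith [mul_nonneg hk.le (sub_nonneg.2 hlogb)]

theorem card_mul_logb_add_mul_logb_le_sum {α : Type*} [Fintype α] {lam k : ℕ} {d : α → ℕ}
    (hα : 2 ≤ Fintype.card α) (hk : 2 * k + 1 ≤ lam) (hd : ∀ v, lam ≤ d v)
    (hkraft : ∑ v, ((d v).choose k : ℝ) / 2 ^ d v ≤ 1) :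
    Fintype.card α * (logb 2 (Fintype.card α) + k * logb 2 (logb 2 (Fintype.card α) / lam))
      ≤ ∑ v, (d v : ℝ) := by
  have : Nonempty α := Fintype.card_pos_iff.1 (by omega)
  set n : ℝ := (Fintype.card α : ℝ)
  have hn : 0 < n := by positivity
  have hsum : ∑ v, exp (k * log (d v) - log 2 * d v) ≤ k ^ k := by
    calc ∑ v, exp (k * log (d v) - log 2 * d v)
        = ∑ v, ((d v : ℝ) ^ k / 2 ^ d v) :=
          sum_congr rfl fun v _ => exp_mul_log_sub_log_two_mul_natCast k (by have := hd v; omega)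
      _ ≤ ∑ v, (k : ℝ) ^ k * ((d v).choose k / 2 ^ d v) := by
          gcongr with v
          rw [← mul_div_assoc]
          gcongr
          exact_mod_cast Nat.pow_le_pow_mul_choose (by have := hd v; omega)
      _ ≤ k ^ k := by
          rw [← mul_sum]
          exact mul_le_of_le_one_right (by positivity) hkraft
  have hmean := logb_card_add_mul_logb_sub_le_mean (x := fun v => (d v : ℝ))
    (fun v => by exact_mod_cast hk.trans (hd v)) hsum
  have hlam_le_mean : (lam : ℝ) ≤ (∑ v, (d v : ℝ)) / n := by
    rw [le_div_iff₀ hn]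
    have := sum_le_sum fun v (_ : v ∈ univ) => (Nat.cast_le (α := ℝ)).2 (hd v)
    simpa [n, mul_comm] using this
  have hL : 0 < logb 2 n := logb_pos one_lt_two (by simp only [n]; exact_mod_cast hα)
  have key := add_mul_logb_div_le_of_add_mul_logb_sub_le hL k.cast_nonneg
    (by exact_mod_cast (show k ≤ lam by omega)) hlam_le_mean hmean
  rwa [le_div_iff₀ hn, mul_comm] at key

theorem IsBipartiteCovering.card_mul_logb_add_mul_logb_le_sum_card {α ι : Type*} [Fintype α]
    [Nontrivial α] [DecidableEq α] [Fintype ι] [DecidableEq ι] {lam k : ℕ}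
    {A B : ι → Finset α} (hdisj : ∀ i, Disjoint (A i) (B i)) (h : IsBipartiteCovering lam A B)
    (hk : 2 * k + 1 ≤ lam) :
    Fintype.card α * (logb 2 (Fintype.card α) + k * logb 2 (logb 2 (Fintype.card α) / lam))
      ≤ ∑ i, (#(A i ∪ B i) : ℝ) := by
  rw [← Nat.cast_sum, sum_card_union_eq_sum_coverDegree, Nat.cast_sum]
  exact card_mul_logb_add_mul_logb_le_sum Fintype.one_lt_card hk h.le_coverDegree
    (h.sum_choose_div_two_pow_le_one hdisj (by omega))

theorem floor_natCast_sub_one_div_two {lam : ℕ} (hlam : 1 ≤ lam) :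
    ⌊((lam : ℝ) - 1) / 2⌋ = ((lam - 1) / 2 : ℕ) := by
  rw [show ((lam : ℝ) - 1) / 2 = ((lam - 1 : ℕ) : ℝ) / ((2 : ℕ) : ℝ) by
    push_cast [Nat.cast_sub hlam]; ring, Int.floor_div_natCast, Int.floor_natCast]
  norm_cast

theorem multigraph_hansel_lower_bound_general (n lam m : ℕ) (hlam : 1 ≤ lam)
    (A B : Fin m → Finset (Fin n))
    (hdisj : ∀ i, Disjoint (A i) (B i))
    (hcover : ∀ x y : Fin n, x ≠ y →
      lam ≤ (Finset.univ.filter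
        (fun i => (x ∈ A i ∧ y ∈ B i) ∨ (x ∈ B i ∧ y ∈ A i))).card) :
    max (2 * (lam : ℝ) * ((n : ℝ) - 1))
      ((n : ℝ) * (Real.logb 2 n
        + (⌊((lam : ℝ) - 1) / 2⌋ : ℝ) * Real.logb 2 (Real.logb 2 n / (lam : ℝ))
        - (lam : ℝ) - 1))
      ≤ ∑ i, ((A i ∪ B i).card : ℝ) := by
  have hcov : IsBipartiteCovering lam A B := hcover
  refine max_le ?_ ?_
  · have hpairs := hcov.two_mul_mul_card_sub_one_le hdisj
    rw [Fintype.card_fin] at hpairs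
    have hn : (n : ℝ) ≤ (n - 1 : ℕ) + 1 := by exact_mod_cast (show n ≤ n - 1 + 1 by omega)
    calc 2 * (lam : ℝ) * (n - 1) ≤ 2 * lam * (n - 1 : ℕ) := by gcongr; linarith
      _ ≤ ∑ i, (#(A i ∪ B i) : ℝ) := by exact_mod_cast hpairs
  · set k := (lam - 1) / 2
    rw [floor_natCast_sub_one_div_two hlam, Int.cast_natCast]
    obtain hn | hn := le_or_gt n 1
    · have hlog : logb 2 n = 0 := by interval_cases n <;> simp
      rw [hlog, zero_div, logb_zero, mul_zero, zero_add]
      exact (mul_nonpos_of_nonneg_of_nonpos n.cast_nonneg (by linarith)).trans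
        (sum_nonneg fun _ _ => Nat.cast_nonneg _)
    · have : Nontrivial (Fin n) := Fin.nontrivial_iff_two_le.2 hn
      have hbound := hcov.card_mul_logb_add_mul_logb_le_sum_card hdisj (k := k) (by omega)
      rw [Fintype.card_fin] at hbound
      exact (mul_le_mul_of_nonneg_left (by linarith) n.cast_nonneg).trans hbound

theorem multigraph_hansel_lower_bound (n lam m : ℕ) (hn : 1 ≤ n) (hlam : 1 ≤ lam)
    (A B : Fin m → Finset (Fin n))
    (hdisj : ∀ i, Disjoint (A i) (B i))
    (hcover : ∀ x y : Fin n, x ≠ y →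
      lam ≤ (Finset.univ.filter
        (fun i => (x ∈ A i ∧ y ∈ B i) ∨ (x ∈ B i ∧ y ∈ A i))).card) :
    max (2 * (lam : ℝ) * ((n : ℝ) - 1))
      ((n : ℝ) * (Real.logb 2 n
        + (⌊((lam : ℝ) - 1) / 2⌋ : ℝ) * Real.logb 2 (Real.logb 2 n / (lam : ℝ))
        - (lam : ℝ) - 1))
      ≤ ∑ i, ((A i ∪ B i).card : ℝ) :=
  multigraph_hansel_lower_bound_general n lam m hlam A B hdisj hcover
end

section
/- For every ε > 0 there exists N such that for all n ≥ N and all positive integers λ, there exists a bipartite covering H = {H_1, …, H_m} of the complete multigraph K_n^λ with cap(H) ≤ n·( log₂(n−1) + (1+ε)·λ·log₂ log₂ n ). -/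
/-!
A binary code `f : V → ι → Bool` of minimum distance `λ` yields a `λ`-fold bipartite covering
of the complete multigraph on `V` with one graph per coordinate `i`, splitting `V` by the bit
`f · i`; each graph has capacity `|V|`. Take the Reed–Solomon code of dimension `k` and length
`D ≤ 2^t` over `GF(2^t)`, write its symbols in binary and repeat every bit `r` times: the
distance is at least `(D - k + 1) r` with `D t r` coordinates. Choosing
`t = ⌈log log n⌉ + O_ε(1)`, `k ≈ log n / t`, `r ≈ λ / (2^t - k + 1)` and `D` minimal gives
`D t r ≤ log (n - 1) + (1 + ε) λ log log n`.
-/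

open Finset Function Polynomial Filter

section Hamming

variable {ι κ β γ : Type*} [Fintype ι] [Fintype κ] [DecidableEq γ]

theorem hammingDist_comp_equiv [DecidableEq β] (σ : κ ≃ ι) (x y : ι → β) :
    hammingDist (x ∘ σ) (y ∘ σ) = hammingDist x y := by
  simp only [hammingDist, card_filter, comp_apply]
  exact σ.sum_comp fun i => if x i ≠ y i then 1 else 0

theorem hammingDist_concat_eq_sum (e : β → κ → γ) (x y : ι → β) :
    hammingDist (fun p : ι × κ => e (x p.1) p.2) (fun p => e (y p.1) p.2) =
      ∑ i, hammingDist (e (x i)) (e (y i)) := by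
  simp only [hammingDist, card_filter]
  exact Fintype.sum_prod_type _

theorem mul_hammingDist_le_hammingDist_concat [DecidableEq β] {e : β → κ → γ} {d : ℕ}
    (he : ∀ a b, a ≠ b → d ≤ hammingDist (e a) (e b)) (x y : ι → β) :
    d * hammingDist x y ≤
      hammingDist (fun p : ι × κ => e (x p.1) p.2) (fun p => e (y p.1) p.2) := by
  rw [hammingDist_concat_eq_sum, hammingDist, mul_comm, ← smul_eq_mul, ← sum_const]
  calc ∑ i with x i ≠ y i, d ≤ ∑ i with x i ≠ y i, hammingDist (e (x i)) (e (y i)) :=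
        sum_le_sum fun i hi => he _ _ (mem_filter.mp hi).2
    _ ≤ ∑ i, hammingDist (e (x i)) (e (y i)) := sum_le_sum_of_subset (filter_subset _ _)

end Hamming

theorem Polynomial.card_lt_hammingDist_eval_add {R ι : Type*} [CommRing R] [IsDomain R]
    [DecidableEq R] [Fintype ι] {α : ι → R} (hα : Injective α) {k : ℕ} {f g : R[X]}
    (hf : f.degree < k) (hg : g.degree < k) (hfg : f ≠ g) :
    Fintype.card ι < hammingDist (fun i => f.eval (α i)) (fun i => g.eval (α i)) + k := by
  by_contra! h
  set s : Finset ι := {i | f.eval (α i) = g.eval (α i)}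
  have hsplit : #s + hammingDist (fun i => f.eval (α i)) (fun i => g.eval (α i)) =
      Fintype.card ι :=
    card_filter_add_card_filter_not _
  have hk : (k : WithBot ℕ) ≤ #s := by exact_mod_cast (by omega : k ≤ #s)
  exact hfg (eq_of_degrees_lt_of_eval_index_eq s hα.injOn (hf.trans_le hk) (hg.trans_le hk)
    fun i hi => (mem_filter.mp hi).2)

def IsBipartiteCover {V ι : Type*} [DecidableEq V] [Fintype ι] (lam : ℕ)
    (A B : ι → Finset V) : Prop :=
  (∀ i, Disjoint (A i) (B i)) ∧
    ∀ x y : V, x ≠ y → lam ≤ #{i | (x ∈ A i ∧ y ∈ B i) ∨ (x ∈ B i ∧ y ∈ A i)}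

theorem exists_isBipartiteCover_of_hammingDist {V ι : Type*} [DecidableEq V] [Fintype V]
    [Fintype ι] {lam : ℕ} (f : V → ι → Bool)
    (hf : ∀ x y, x ≠ y → lam ≤ hammingDist (f x) (f y)) :
    ∃ A B : ι → Finset V, IsBipartiteCover lam A B ∧ ∀ i, A i ∪ B i = univ := by
  refine ⟨fun i => {x | f x i = false}, fun i => {x | f x i = true},
    ⟨fun i => disjoint_filter.2 fun x _ h => by simp [h], fun x y hxy => ?_⟩, fun i => ?_⟩
  · refine (hf x y hxy).trans_eq (congrArg card (filter_congr fun i _ => ?_))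
    cases hx : f x i <;> cases hy : f y i <;> simp [hx, hy]
  · ext x
    cases f x i <;> simp_all

theorem exists_binary_code (n t k D r : ℕ) (ht : t ≠ 0) (hD : D ≤ 2 ^ t)
    (hn : n ≤ 2 ^ (t * k)) :
    ∃ f : Fin n → Fin (D * t * r) → Bool,
      ∀ x y, x ≠ y → (D + 1 - k) * r ≤ hammingDist (f x) (f y) := by
  classical
  let F := GaloisField 2 t
  let _ : Fintype F := Fintype.ofFinite F
  have hF : Fintype.card F = 2 ^ t := by
    rw [← Nat.card_eq_fintype_card]; exact GaloisField.card 2 t ht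
  obtain ⟨msg⟩ : Nonempty (Fin n ↪ (Fin k → F)) :=
    Function.Embedding.nonempty_of_card_le (by simpa [hF, ← pow_mul])
  obtain ⟨α⟩ : Nonempty (Fin D ↪ F) := Function.Embedding.nonempty_of_card_le (by simpa [hF])
  let bits : F ≃ (Fin t → Bool) := Fintype.equivOfCardEq (by simp [hF])
  let P : Fin n → F[X] := fun x => (degreeLTEquiv F k).symm (msg x)
  have hP : Injective P :=
    Subtype.val_injective.comp ((degreeLTEquiv F k).symm.injective.comp msg.injective)
  have hPdeg : ∀ x, (P x).degree < k := fun x =>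
    mem_degreeLT.mp ((degreeLTEquiv F k).symm (msg x)).2
  let rs : Fin n → Fin D → F := fun x j => (P x).eval (α j)
  let bin : Fin n → Fin D × Fin t → Bool := fun x p => bits (rs x p.1) p.2
  let rep : Fin n → (Fin D × Fin t) × Fin r → Bool := fun x p => bin x p.1
  let σ : (Fin D × Fin t) × Fin r ≃ Fin (D * t * r) :=
    (finProdFinEquiv.prodCongr (Equiv.refl _)).trans finProdFinEquiv
  refine ⟨fun x => rep x ∘ σ.symm, fun x y hxy => ?_⟩
  rw [hammingDist_comp_equiv]
  have h_rs : D + 1 - k ≤ hammingDist (rs x) (rs y) := by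
    have := card_lt_hammingDist_eval_add α.injective (hPdeg x) (hPdeg y) (hP.ne hxy)
    rw [Fintype.card_fin] at this
    change D < hammingDist (rs x) (rs y) + k at this
    omega
  have h_bin : hammingDist (rs x) (rs y) ≤ hammingDist (bin x) (bin y) := by
    simpa using mul_hammingDist_le_hammingDist_concat (d := 1) (e := fun a => bits a)
      (fun a b hab => hammingDist_pos.2 (bits.injective.ne hab)) (rs x) (rs y)
  have h_rep : r * hammingDist (bin x) (bin y) ≤ hammingDist (rep x) (rep y) :=
    mul_hammingDist_le_hammingDist_concat (e := fun c (_ : Fin r) => c)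
      (fun a b hab => by simp [hammingDist, hab]) _ _
  calc (D + 1 - k) * r ≤ r * hammingDist (bin x) (bin y) := by
        rw [mul_comm]; gcongr; exact h_rs.trans h_bin
    _ ≤ _ := h_rep

theorem Nat.exists_le_mul_lt_add (a : ℕ) {b : ℕ} (hb : 0 < b) :
    ∃ q, a ≤ q * b ∧ q * b < a + b := by
  refine ⟨(a + b - 1) / b, ?_, ?_⟩ <;>
  · have := Nat.div_add_mod (a + b - 1) b
    have := Nat.mod_lt (a + b - 1) hb
    rw [mul_comm]
    omega

theorem exists_isBipartiteCover_capacity_le (n lam t k : ℕ) (ht : t ≠ 0) (hk : 1 ≤ k)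
    (hkt : k ≤ 2 ^ t) (hn : n ≤ 2 ^ (t * k)) (hlam : 1 ≤ lam) :
    ∃ (m : ℕ) (A B : Fin m → Finset (Fin n)), IsBipartiteCover lam A B ∧
      ∑ i, ((A i ∪ B i).card : ℝ) ≤
        n * (t * (k - 1 + lam * (1 + k / (2 ^ t - k + 1)))) := by
  -- `r = ⌈λ / Q⌉` repetitions and `u = ⌈λ / r⌉ ≤ Q`, so that `D = k - 1 + u ≤ 2 ^ t`.
  set Q := 2 ^ t - k + 1 with hQ
  obtain ⟨r, hlam_rQ, hrQ_lt⟩ := Nat.exists_le_mul_lt_add lam (b := Q) (by omega)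
  have hr : 0 < r := Nat.pos_of_ne_zero fun h => by simp [h] at hlam_rQ; omega
  obtain ⟨u, hlam_ur, hur_lt⟩ := Nat.exists_le_mul_lt_add lam hr
  have huQ : u ≤ Q := Nat.lt_succ_iff.mp (Nat.lt_of_mul_lt_mul_right (a := r) (by nlinarith))
  obtain ⟨f, hf⟩ := exists_binary_code n t k (k - 1 + u) r ht (by omega) hn
  obtain ⟨A, B, hcov, hAB⟩ := exists_isBipartiteCover_of_hammingDist f fun x y hxy =>
    hlam_ur.trans (by simpa [show k - 1 + u + 1 - k = u by omega] using hf x y hxy)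
  refine ⟨_, A, B, hcov, ?_⟩
  simp only [hAB, card_univ, Fintype.card_fin, sum_const, nsmul_eq_mul]
  rw [mul_comm]
  gcongr
  have hQR : (Q : ℝ) = 2 ^ t - k + 1 := by rw [hQ]; push_cast [Nat.cast_sub hkt]; ring
  have hQpos : (0 : ℝ) < Q := by positivity
  rw [← hQR]
  have hr_le : (r : ℝ) ≤ lam / Q + 1 := by
    rw [div_add_one hQpos.ne', le_div_iff₀ hQpos]; exact_mod_cast hrQ_lt.le
  have hur_le : (u : ℝ) * r + 1 ≤ lam + r := by exact_mod_cast hur_lt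
  push_cast [Nat.cast_sub hk]
  calc (k - 1 + u : ℝ) * t * r = t * (k * r + (u * r - r)) := by ring
    _ ≤ t * (k * (lam / Q + 1) + (lam - 1)) := by gcongr t * (?_ + ?_) <;> [gcongr; linarith]
    _ = t * (k - 1 + lam * (1 + k / Q)) := by ring

theorem Nat.clog_sub_one_le_logb {b n : ℕ} (hb : 1 < b) (hn : 2 ≤ n) :
    (Nat.clog b n : ℝ) - 1 ≤ Real.logb b (n - 1) := by
  have hc : 1 ≤ Nat.clog b n := Nat.clog_pos hb hn
  have hpow : b ^ (Nat.clog b n - 1) + 1 ≤ n := Nat.pow_pred_clog_lt_self hb hn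
  have hn1 : (1 : ℝ) < n := by exact_mod_cast hn
  rw [Real.le_logb_iff_rpow_le (by exact_mod_cast hb) (by linarith),
    show (Nat.clog b n : ℝ) - 1 = (Nat.clog b n - 1 : ℕ) by push_cast [Nat.cast_sub hc]; ring,
    Real.rpow_natCast, le_sub_iff_add_le]
  exact_mod_cast hpow

theorem exists_le_two_pow_mul_near_logb (n t : ℕ) (hn : 2 ≤ n) (ht : t ≠ 0) :
    ∃ k, 1 ≤ k ∧ n ≤ 2 ^ (t * k) ∧ (t : ℝ) * (k - 1) ≤ Real.logb 2 (n - 1) ∧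
      (k : ℝ) ≤ Real.logb 2 n + 1 := by
  set c := Nat.clog 2 n
  have hc : 1 ≤ c := Nat.clog_pos one_lt_two hn
  have hclog : (c : ℝ) - 1 ≤ Real.logb 2 (n - 1) := by
    exact_mod_cast Nat.clog_sub_one_le_logb one_lt_two hn
  obtain ⟨k, hc_le, hkt_lt⟩ := Nat.exists_le_mul_lt_add c (Nat.pos_of_ne_zero ht)
  have hk : 1 ≤ k := Nat.pos_of_ne_zero fun h => by simp [h] at hc_le; omega
  have hk_le_c : k ≤ c := Nat.lt_succ_iff.mp (Nat.lt_of_mul_lt_mul_right (a := t) (by nlinarith))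
  have htk : t * (k - 1) + 1 ≤ c := by rw [Nat.mul_sub_one, mul_comm]; omega
  refine ⟨k, hk, (Nat.le_pow_clog one_lt_two n).trans ?_, ?_, ?_⟩
  · exact Nat.pow_le_pow_right two_pos (by rw [mul_comm]; exact hc_le)
  · calc (t : ℝ) * (k - 1) = ((t * (k - 1) : ℕ) : ℝ) := by push_cast [Nat.cast_sub hk]; ring
      _ ≤ c - 1 := by rw [le_sub_iff_add_le]; exact_mod_cast htk
      _ ≤ _ := hclog
  · have hmono : Real.logb 2 (n - 1) ≤ Real.logb 2 n :=
      Real.logb_le_logb_of_le one_lt_two (by norm_num; exact_mod_cast hn) (by linarith)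
    have : (k : ℝ) ≤ c := by exact_mod_cast hk_le_c
    linarith

/- With `t = ⌈log log n⌉ + s`, `hs` makes the rate loss `k / (2 ^ t - k + 1)` at most `ε / 2`,
and `hn` then gives `t (1 + ε / 2) ≤ (1 + ε) log log n`. -/
theorem exists_isBipartiteCover_of_le_loglog {ε : ℝ} (hε : 0 < ε) {s : ℕ}
    (hs : 2 + 4 / ε ≤ 2 ^ s) {n : ℕ}
    (hn : (s + 1) * (2 + ε) / ε ≤ Real.logb 2 (Real.logb 2 n))
    (lam : ℕ) (hlam : 1 ≤ lam) :
    ∃ (m : ℕ) (A B : Fin m → Finset (Fin n)), IsBipartiteCover lam A B ∧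
      ∑ i, ((A i ∪ B i).card : ℝ) ≤
        n * (Real.logb 2 (n - 1) + (1 + ε) * lam * Real.logb 2 (Real.logb 2 n)) := by
  set L := Real.logb 2 n
  set LL := Real.logb 2 L
  have hLL : 0 < LL := lt_of_lt_of_le (by positivity) hn
  have hL : 1 < L := by
    by_contra! h
    exact hLL.not_ge (Real.logb_nonpos one_lt_two
      (div_nonneg (Real.log_natCast_nonneg n) (Real.log_nonneg one_le_two)) h)
  have hn2 : 2 ≤ n := by
    by_contra! h
    have hL0 : Real.logb 2 (n : ℝ) = 0 := by interval_cases n <;> simp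
    rw [show L = 0 from hL0] at hL
    norm_num at hL
  set t := ⌈LL⌉₊ + s
  have ht : t ≠ 0 := by have := Nat.ceil_pos.mpr hLL; omega
  have ht_le : (t : ℝ) ≤ LL + 1 + s := by
    have := Nat.ceil_lt_add_one hLL.le
    push_cast [t]; linarith
  have h2t : 2 ^ s * L ≤ (2 : ℝ) ^ t := by
    have hL_le : L ≤ (2 : ℝ) ^ ⌈LL⌉₊ := by
      calc L = (2 : ℝ) ^ LL := (Real.rpow_logb two_pos (by norm_num) (by linarith)).symm
        _ ≤ (2 : ℝ) ^ (⌈LL⌉₊ : ℝ) :=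
          Real.rpow_le_rpow_of_exponent_le one_le_two (Nat.le_ceil _)
        _ = _ := Real.rpow_natCast _ _
    rw [pow_add, mul_comm]
    gcongr
  obtain ⟨k, hk, hnk, htk, hkL⟩ := exists_le_two_pow_mul_near_logb n t hn2 ht
  have hkt : k ≤ 2 ^ t := by
    have h2s : (2 : ℝ) ≤ 2 ^ s := le_trans (by linarith [div_pos four_pos hε]) hs
    have : (k : ℝ) ≤ 2 ^ t := by nlinarith
    exact_mod_cast this
  obtain ⟨m, A, B, hcov, hcap⟩ :=
    exists_isBipartiteCover_capacity_le n lam t k ht hk hkt hnk hlam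
  refine ⟨m, A, B, hcov, hcap.trans ?_⟩
  set Q : ℝ := 2 ^ t - k + 1
  have hQ : 0 < Q := by
    have : (k : ℝ) ≤ 2 ^ t := by exact_mod_cast hkt
    positivity
  have hkQ : k / Q ≤ ε / 2 := by
    have h4 : 4 / ε * L ≤ (2 ^ s - 2) * L := by gcongr; linarith
    have h4' : ε / 2 * (4 / ε * L) = 2 * L := by field_simp; ring
    rw [div_le_iff₀ hQ]
    nlinarith
  have hrate : t * (1 + k / Q) ≤ (1 + ε) * LL := by
    have hK : (s + 1) * (2 + ε) ≤ LL * ε := (div_le_iff₀ hε).mp hn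
    calc t * (1 + k / Q) ≤ (LL + 1 + s) * (1 + ε / 2) := by gcongr
      _ ≤ (1 + ε) * LL := by nlinarith
  gcongr
  calc t * (k - 1 + lam * (1 + k / Q)) = t * (k - 1) + lam * (t * (1 + k / Q)) := by ring
    _ ≤ Real.logb 2 (n - 1) + lam * ((1 + ε) * LL) := by gcongr
    _ = _ := by ring

theorem multigraph_cover_upper_bound (ε : ℝ) (hε : 0 < ε) :
    ∃ N : ℕ, ∀ n : ℕ, N ≤ n → ∀ lam : ℕ, 1 ≤ lam →
      ∃ (m : ℕ) (A B : Fin m → Finset (Fin n)),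
        (∀ i, Disjoint (A i) (B i)) ∧
        (∀ x y : Fin n, x ≠ y →
          lam ≤ (Finset.univ.filter
            (fun i => (x ∈ A i ∧ y ∈ B i) ∨ (x ∈ B i ∧ y ∈ A i))).card) ∧
        (∑ i, ((A i ∪ B i).card : ℝ)) ≤
          (n : ℝ) * (Real.logb 2 ((n : ℝ) - 1)
            + (1 + ε) * (lam : ℝ) * Real.logb 2 (Real.logb 2 n)) := by
  obtain ⟨s, hs⟩ := pow_unbounded_of_one_lt (2 + 4 / ε) (one_lt_two : (1 : ℝ) < 2)
  have hLL : Tendsto (fun n : ℕ => Real.logb 2 (Real.logb 2 n)) atTop atTop :=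
    (Real.tendsto_logb_atTop one_lt_two).comp
      ((Real.tendsto_logb_atTop one_lt_two).comp tendsto_natCast_atTop_atTop)
  obtain ⟨N, hN⟩ := eventually_atTop.mp (hLL.eventually_ge_atTop ((s + 1) * (2 + ε) / ε))
  refine ⟨N, fun n hn lam hlam => ?_⟩
  obtain ⟨m, A, B, hcov, hcap⟩ :=
    exists_isBipartiteCover_of_le_loglog hε hs.le (hN n hn) lam hlam
  exact ⟨m, A, B, hcov.1, hcov.2, hcap⟩
end

section
/- Let n ≥ 2 and let λ = k·log₂(n−1) for some real k ≥ 1/2 (with λ a positive integer). Then there exists a bipartite covering H of the complete multigraph K_n^λ with |H| ≤ (2 + 30/√k)·λ, and hence cap(H) ≤ (2 + 30/√k)·λ·n. -/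
/-! Give every vertex a binary codeword of length `m` so that distinct codewords differ in at
least `λ` coordinates; coordinate `i` then splits the vertices into those with a `1` and those
with a `0` there, and two vertices are separated by exactly as many splits as the Hamming
distance of their codewords. A greedy choice finds `n` such codewords once
`n · ∑_{j<λ} C(m, j) ≤ 2^m`, and since `n ≤ 2^(λ/k + 1)`, the Chernoff-type estimate
`∑_{j<λ} C(m, j) · x^λ ≤ (1 + x)^m` shows that `m = ⌈(2 + 16/√k) λ⌉` suffices. -/

open Finset Real

section HammingCode

variable {ι : Type*} [Fintype ι] [DecidableEq ι]

theorem card_filter_hammingDist_lt_le (x : ι → Bool) (d : ℕ) :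
    #{y | hammingDist x y < d} ≤ ∑ j ∈ range d, (Fintype.card ι).choose j := by
  calc #{y | hammingDist x y < d}
      ≤ #((range d).biUnion fun j => powersetCard j (univ : Finset ι)) := by
        refine card_le_card_of_injOn (fun y => ({i | x i ≠ y i} : Finset ι)) ?_ ?_
        · intro y hy
          simp only [coe_filter, mem_univ, true_and, Set.mem_ofPred_eq] at hy
          simp only [coe_biUnion, coe_range, Set.mem_iUnion, Set.mem_Iio, mem_coe,
            mem_powersetCard, subset_univ, true_and, exists_prop]
          exact ⟨_, hy, rfl⟩
        · intro y _ z _ hyz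
          funext i
          have := congrArg (i ∈ ·) hyz
          simp only [mem_filter, mem_univ, true_and, eq_iff_iff] at this
          revert this
          cases x i <;> cases y i <;> cases z i <;> simp
    _ ≤ ∑ j ∈ range d, #(powersetCard j (univ : Finset ι)) := card_biUnion_le
    _ = ∑ j ∈ range d, (Fintype.card ι).choose j := by simp only [card_powersetCard, card_univ]

theorem exists_forall_le_hammingDist {n : ℕ} (c : Fin n → ι → Bool) (d : ℕ)
    (h : n * ∑ j ∈ range d, (Fintype.card ι).choose j < 2 ^ Fintype.card ι) :
    ∃ y, ∀ a, d ≤ hammingDist (c a) y := by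
  by_contra! hcover
  have hunion :
      (univ : Finset (ι → Bool)) ⊆ univ.biUnion fun a => {y | hammingDist (c a) y < d} := by
    intro y _
    obtain ⟨a, ha⟩ := hcover y
    exact mem_biUnion.2 ⟨a, mem_univ a, mem_filter.2 ⟨mem_univ y, ha⟩⟩
  have := (card_le_card hunion).trans card_biUnion_le
  have hballs : ∑ a : Fin n, #{y | hammingDist (c a) y < d} ≤
      n * ∑ j ∈ range d, (Fintype.card ι).choose j := by
    simpa using sum_le_sum fun a (_ : a ∈ univ) => card_filter_hammingDist_lt_le (c a) d
  simp only [card_univ, Fintype.card_fun, Fintype.card_bool] at this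
  omega

-- The Gilbert–Varshamov bound, by greedy choice of codewords.
theorem exists_pairwise_le_hammingDist (n d : ℕ)
    (h : n * ∑ j ∈ range d, (Fintype.card ι).choose j ≤ 2 ^ Fintype.card ι) :
    ∃ c : Fin n → ι → Bool, Pairwise fun a b => d ≤ hammingDist (c a) (c b) := by
  induction n with
  | zero => exact ⟨finZeroElim, fun a => a.elim0⟩
  | succ n ih =>
    set V := ∑ j ∈ range d, (Fintype.card ι).choose j
    have hlt : n * V < 2 ^ Fintype.card ι := by
      rcases V.eq_zero_or_pos with hV | hV
      · simp [hV]
      · nlinarith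
    obtain ⟨c, hc⟩ := ih (by nlinarith)
    obtain ⟨y, hy⟩ := exists_forall_le_hammingDist c d hlt
    refine ⟨Fin.snoc (α := fun _ => ι → Bool) c y, fun a b hab => ?_⟩
    induction a using Fin.lastCases <;> induction b using Fin.lastCases <;>
      simp only [Fin.snoc_last, Fin.snoc_castSucc]
    · exact (hab rfl).elim
    · exact (hy _).trans_eq (hammingDist_comm _ _)
    · exact hy _
    · exact hc (fun h => hab (congrArg _ h))

end HammingCode

theorem sum_range_choose_mul_pow_le {m r : ℕ} {x : ℝ} (hx0 : 0 ≤ x) (hx1 : x ≤ 1)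
    (hr : r ≤ m + 1) :
    (∑ j ∈ range r, (m.choose j : ℝ)) * x ^ r ≤ (1 + x) ^ m := by
  calc (∑ j ∈ range r, (m.choose j : ℝ)) * x ^ r
      = ∑ j ∈ range r, x ^ r * m.choose j := by rw [sum_mul]; simp only [mul_comm]
    _ ≤ ∑ j ∈ range r, x ^ j * m.choose j :=
        sum_le_sum fun j hj =>
          mul_le_mul_of_nonneg_right (pow_le_pow_of_le_one hx0 hx1 (mem_range.1 hj).le)
            (Nat.cast_nonneg _)
    _ ≤ ∑ j ∈ range (m + 1), x ^ j * m.choose j :=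
        sum_le_sum_of_subset_of_nonneg (range_subset_range.2 hr) fun _ _ _ => by positivity
    _ = (1 + x) ^ m := by simp [add_comm 1 x, add_pow]

theorem neg_sub_two_mul_sq_le_log_one_sub {u : ℝ} (hu : u ≤ 1 / 2) :
    -u - 2 * u ^ 2 ≤ log (1 - u) := by
  have hpos : 0 < 1 - u := by linarith
  have hinv : -u - 2 * u ^ 2 ≤ 1 - (1 - u)⁻¹ := by
    rw [← sub_nonneg]
    have : 1 - (1 - u)⁻¹ - (-u - 2 * u ^ 2) = u ^ 2 * (1 - 2 * u) / (1 - u) := by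
      field_simp; ring
    rw [this]; have : 0 ≤ 1 - 2 * u := by linarith
    positivity
  exact hinv.trans (one_sub_inv_le_log_of_pos hpos)

theorem log_two_sub_le {u : ℝ} (hu : u < 2) : log (2 - u) ≤ log 2 - u / 2 := by
  have h := log_le_sub_one_of_pos (x := (2 - u) / 2) (by linarith)
  rw [log_div (by linarith) two_ne_zero] at h
  linarith

-- Chernoff: `∑_{j<λ} C(m,j) ≤ (2-u)^m / (1-u)^λ`; `u = 1/(4√k)` makes this `≤ 2^m / n`.
theorem card_mul_sum_range_choose_le_two_pow {n lam m : ℕ} {k : ℝ} (hk : 1 / 4 ≤ k)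
    (hklam : k ≤ lam) (hn : log n ≤ (lam / k + 1) * log 2) (hm : (2 + 16 / √k) * lam ≤ m) :
    n * ∑ j ∈ range lam, m.choose j ≤ 2 ^ m := by
  rcases n.eq_zero_or_pos with rfl | hn0
  · simp
  have hk0 : 0 < k := by linarith
  have hsk : 1 / 2 ≤ √k := le_sqrt_of_sq_le (by linarith)
  set u : ℝ := 1 / (4 * √k)
  have hu0 : 0 < u := by positivity
  have hu : u ≤ 1 / 2 := by rw [div_le_iff₀ (by positivity)]; linarith
  have h1u : 0 < 1 - u := by linarith
  have h2u : 0 < 2 - u := by linarith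
  have hu2 : u ^ 2 = 1 / (16 * k) := by
    rw [div_pow, mul_pow, sq_sqrt hk0.le]; norm_num
  have h16u : 16 / √k * u = 4 / k := by
    rw [show 16 / √k * u = 4 / √k ^ 2 by simp only [u]; field_simp; ring, sq_sqrt hk0.le]
  set t := lam / k
  have ht : 1 ≤ t := by rwa [one_le_div hk0]
  have hlam_le : lam ≤ m := by
    have : (lam : ℝ) ≤ m := by nlinarith [show 0 ≤ 16 / √k by positivity]
    exact_mod_cast this
  have hlog : log n + m * log (2 - u) ≤ m * log 2 + lam * log (1 - u) := by
    have h2 : (m : ℝ) * log (2 - u) ≤ m * log 2 - m * u / 2 := by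
      have := mul_le_mul_of_nonneg_left (log_two_sub_le (by linarith : u < 2))
        (Nat.cast_nonneg (α := ℝ) m)
      linarith
    have h1 : lam * (-u - 2 * u ^ 2) ≤ lam * log (1 - u) :=
      mul_le_mul_of_nonneg_left (neg_sub_two_mul_sq_le_log_one_sub hu) (Nat.cast_nonneg _)
    have hmu : lam * u + 2 * t ≤ m * u / 2 := by
      have := mul_le_mul_of_nonneg_right hm hu0.le
      have : lam * (16 / √k * u) = 4 * t := by rw [h16u]; ring
      nlinarith
    have hlamu2 : lam * u ^ 2 = t / 16 := by rw [hu2]; ring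
    have hlog2 := log_two_lt_d9
    nlinarith
  have hchernoff := sum_range_choose_mul_pow_le (m := m) (r := lam) (x := 1 - u)
    (by linarith) (by linarith) (by omega)
  rw [show (1 : ℝ) + (1 - u) = 2 - u by ring] at hchernoff
  have hexp : (n : ℝ) * (2 - u) ^ m ≤ 2 ^ m * (1 - u) ^ lam := by
    rw [← log_le_log_iff (by positivity) (by positivity), log_mul (by positivity) (by positivity),
      log_mul (by positivity) (by positivity), log_pow, log_pow, log_pow]
    linarith
  have hreal : (n : ℝ) * ∑ j ∈ range lam, (m.choose j : ℝ) ≤ 2 ^ m := by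
    refine le_of_mul_le_mul_right ?_ (pow_pos h1u lam)
    calc (n : ℝ) * (∑ j ∈ range lam, (m.choose j : ℝ)) * (1 - u) ^ lam
        ≤ n * (2 - u) ^ m := by rw [mul_assoc]; gcongr
      _ ≤ 2 ^ m * (1 - u) ^ lam := hexp
  exact_mod_cast hreal

theorem exists_separating_pairs_of_pairwise_le_hammingDist {V ι : Type*} [Fintype V]
    [DecidableEq V] [Fintype ι] {d : ℕ} (c : V → ι → Bool)
    (hc : Pairwise fun a b => d ≤ hammingDist (c a) (c b)) :
    ∃ A B : ι → Finset V, (∀ i, Disjoint (A i) (B i)) ∧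
      ∀ x y, x ≠ y →
        d ≤ #{i | (x ∈ A i ∧ y ∈ B i) ∨ (x ∈ B i ∧ y ∈ A i)} := by
  refine ⟨fun i => {v | c v i}, fun i => {v | c v i = false}, fun i => ?_, fun x y hxy => ?_⟩
  · exact disjoint_filter.2 fun v _ h => by simp [h]
  · refine (hc hxy).trans (card_le_card fun i => ?_)
    simp only [mem_filter, mem_univ, true_and]
    cases c x i <;> cases c y i <;> simp

theorem one_le_logb_two_natCast {N : ℕ} (h : 0 < logb 2 N) : 1 ≤ logb 2 N := by
  rcases N.eq_zero_or_pos with rfl | hN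
  · simp at h
  have hN' : (0 : ℝ) < N := by exact_mod_cast hN
  have h2 : (2 : ℝ) ≤ N := by
    have : 1 < N := by exact_mod_cast (logb_pos_iff one_lt_two hN').1 h
    exact_mod_cast this
  rwa [le_logb_iff_rpow_le one_lt_two hN', rpow_one]

theorem log_le_logb_two_sub_one_add_one_mul_log_two {x : ℝ} (hx : 2 ≤ x) :
    log x ≤ (logb 2 (x - 1) + 1) * log 2 := by
  calc log x ≤ log (2 * (x - 1)) := log_le_log (by linarith) (by linarith)
    _ = (logb 2 (x - 1) + 1) * log 2 := by
      rw [log_mul two_ne_zero (by linarith), ← log_div_log,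
        add_mul, div_mul_cancel₀ _ (log_pos one_lt_two).ne']
      ring

theorem natCeil_two_add_mul_le {k L : ℝ} (hk : 1 / 2 ≤ k) (hkL : k ≤ L) :
    (⌈(2 + 16 / √k) * L⌉₊ : ℝ) ≤ (2 + 30 / √k) * L := by
  have hk0 : 0 < k := by linarith
  have hsk : 0 < √k := sqrt_pos.2 hk0
  have hL : 0 ≤ L := by linarith
  have hceil : (⌈(2 + 16 / √k) * L⌉₊ : ℝ) < (2 + 16 / √k) * L + 1 :=
    Nat.ceil_lt_add_one (by positivity)
  have hslack : 1 ≤ 14 / √k * L := by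
    rw [div_mul_eq_mul_div, le_div_iff₀ hsk]
    nlinarith [sq_sqrt hk0.le, sqrt_nonneg k]
  have : (2 + 30 / √k) * L = (2 + 16 / √k) * L + 14 / √k * L := by ring
  linarith

theorem multigraph_cover_upper_bound_linear (n lam : ℕ) (k : ℝ)
    (hn : 2 ≤ n) (hk : 1 / 2 ≤ k) (hlam : 1 ≤ lam)
    (hlamk : (lam : ℝ) = k * Real.logb 2 ((n : ℝ) - 1)) :
    ∃ (m : ℕ) (A B : Fin m → Finset (Fin n)),
      (∀ i, Disjoint (A i) (B i)) ∧
      (∀ x y : Fin n, x ≠ y →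
        lam ≤ (Finset.univ.filter
          (fun i => (x ∈ A i ∧ y ∈ B i) ∨ (x ∈ B i ∧ y ∈ A i))).card) ∧
      (m : ℝ) ≤ (2 + 30 / Real.sqrt k) * (lam : ℝ) ∧
      (∑ i, ((A i ∪ B i).card : ℝ)) ≤ (2 + 30 / Real.sqrt k) * (lam : ℝ) * (n : ℝ) := by
  have hk0 : 0 < k := by linarith
  have hlogb : 1 ≤ logb 2 ((n : ℝ) - 1) := by
    have hpos : 0 < logb 2 ((n : ℝ) - 1) :=
      pos_of_mul_pos_right (hlamk ▸ (by exact_mod_cast hlam : (0 : ℝ) < lam)) hk0.le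
    rw [← Nat.cast_pred (by omega)] at hpos ⊢
    exact one_le_logb_two_natCast hpos
  have hklam : k ≤ lam := by rw [hlamk]; nlinarith
  have hlogn : log n ≤ (lam / k + 1) * log 2 := by
    rw [hlamk, mul_div_cancel_left₀ _ hk0.ne']
    exact log_le_logb_two_sub_one_add_one_mul_log_two (by exact_mod_cast hn)
  set m := ⌈(2 + 16 / √k) * lam⌉₊
  have hm : (m : ℝ) ≤ (2 + 30 / √k) * lam := natCeil_two_add_mul_le hk hklam
  obtain ⟨c, hc⟩ := exists_pairwise_le_hammingDist (ι := Fin m) n lam (by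
    simpa using card_mul_sum_range_choose_le_two_pow (by linarith) hklam hlogn (Nat.le_ceil _))
  obtain ⟨A, B, hAB, hsep⟩ := exists_separating_pairs_of_pairwise_le_hammingDist c hc
  refine ⟨m, A, B, hAB, hsep, hm, ?_⟩
  have hcap (i : Fin m) : ((A i ∪ B i).card : ℝ) ≤ n := by
    exact_mod_cast (card_le_univ _).trans_eq (Fintype.card_fin n)
  calc ∑ i, ((A i ∪ B i).card : ℝ)
      ≤ ∑ _i : Fin m, (n : ℝ) := sum_le_sum fun i _ => hcap i
    _ = m * n := by simp
    _ ≤ (2 + 30 / √k) * lam * n := by gcongr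
end

section
/- For every c with 1/2 ≤ c ≤ 1 and every ε > 0 there exists N such that for all n ≥ N, if λ = ⌊(log₂ n)^c⌋, then there exists a bipartite covering H of the complete multigraph K_n^λ with cap(H) ≤ n·( log₂(n−1) + (c+ε)·λ·log₂ log₂ n ). -/
/-!
Let `f : Fin n → Fin k → Bool` be a binary code of minimum distance `λ`. Each coordinate `i`
splits the vertices into `{v | f v i = false}` and `{v | f v i = true}`, and these `k` complete
bipartite graphs cover `K_n^λ` with capacity `k n`. By the greedy (Gilbert–Varshamov) argument
such a code exists once `n ∑_{i < λ} C(k, i) ≤ 2^k`, and `∑_{i ≤ r} C(k, i) ≤ (e k / r)^r`.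
With `L = log n` and `λ ≈ L^c`, take `k ≈ L + (c + ε/2) λ log L`: then `e k / (λ - 1)` is
`O(L^{1-c} log L)`, so `(λ - 1) log (e k / (λ - 1)) ≤ λ (1 - c + o(1)) log L`, which is at most
`(c + ε/2) λ log L` because `c ≥ 1/2`.
-/

open Finset Real Filter
open scoped Nat

section

variable {ι β : Type*} [Fintype ι] [DecidableEq ι]

theorem card_hammingDist_le_le_sum_choose (x : ι → Bool) (r : ℕ) :
    #{y | hammingDist x y ≤ r} ≤ ∑ i ∈ range (r + 1), (Fintype.card ι).choose i := by
  calc #{y | hammingDist x y ≤ r}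
      ≤ #((range (r + 1)).biUnion fun i => powersetCard i (univ : Finset ι)) := by
        refine card_le_card_of_injOn (fun y => ({i | x i ≠ y i} : Finset ι)) (fun y hy => ?_) ?_
        · simp only [coe_filter, mem_univ, true_and, Set.mem_ofPred_eq] at hy
          simpa [mem_powersetCard, Nat.lt_succ_iff, hammingDist] using hy
        · intro y₁ _ y₂ _ hs
          funext j
          have hj := congrArg (j ∈ ·) hs
          simp only [mem_filter, mem_univ, true_and, eq_iff_iff] at hj
          revert hj
          cases x j <;> cases y₁ j <;> cases y₂ j <;> simp
    _ ≤ ∑ i ∈ range (r + 1), #(powersetCard i (univ : Finset ι)) := card_biUnion_le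
    _ = ∑ i ∈ range (r + 1), (Fintype.card ι).choose i := by simp [card_powersetCard]

variable [Fintype β] [DecidableEq β] [Nonempty β]

theorem exists_finset_card_eq_pairwise_lt_hammingDist {r V : ℕ}
    (hV : ∀ x : ι → β, #{y | hammingDist x y ≤ r} ≤ V) :
    ∀ n, n * V ≤ Fintype.card (ι → β) →
      ∃ s : Finset (ι → β), #s = n ∧ (s : Set (ι → β)).Pairwise fun x y => r < hammingDist x y
  | 0, _ => ⟨∅, by simp⟩
  | n + 1, hn => by
    have hV₁ : 1 ≤ V :=
      (hV (Classical.arbitrary _)).trans' (card_pos.2 ⟨Classical.arbitrary _, by simp⟩)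
    obtain ⟨s, hs, hpair⟩ := exists_finset_card_eq_pairwise_lt_hammingDist hV n
      (le_trans (by gcongr; omega) hn)
    have hcovered : #(s.biUnion fun x => {y | hammingDist x y ≤ r}) < #(univ : Finset (ι → β)) :=
      calc _ ≤ #s * V := card_biUnion_le_card_mul _ _ _ fun x _ => hV x
        _ < (n + 1) * V := by rw [hs]; nlinarith
        _ ≤ _ := by simpa using hn
    obtain ⟨g, -, hg⟩ := exists_mem_notMem_of_card_lt_card hcovered
    simp only [mem_biUnion, mem_filter, mem_univ, true_and, not_exists, not_and, not_le] at hg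
    refine ⟨insert g s, ?_, ?_⟩
    · rw [card_insert_of_notMem fun hgs => by simpa using hg g hgs, hs]
    · rw [coe_insert, Set.pairwise_insert]
      exact ⟨hpair, fun y hy _ => ⟨hammingDist_comm g y ▸ hg y hy, hg y hy⟩⟩

end

theorem exists_binary_code_s5 {n k r : ℕ} (h : n * ∑ i ∈ range (r + 1), k.choose i ≤ 2 ^ k) :
    ∃ f : Fin n → Fin k → Bool, Pairwise fun a b => r < hammingDist (f a) (f b) := by
  obtain ⟨s, hs, hpair⟩ := exists_finset_card_eq_pairwise_lt_hammingDist
    (fun x : Fin k → Bool => by simpa using card_hammingDist_le_le_sum_choose x r) n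
    (by simpa using h)
  let e : Fin n ≃ s := (s.equivFin.trans (finCongr hs)).symm
  exact ⟨fun a => e a, fun a b hab =>
    hpair (e a).2 (e b).2 fun h => hab (e.injective (Subtype.ext h))⟩

theorem exists_bipartite_cover_of_le_hammingDist {V ι : Type*} [Fintype V] [DecidableEq V]
    [Fintype ι] {lam : ℕ} (f : V → ι → Bool)
    (hf : Pairwise fun x y => lam ≤ hammingDist (f x) (f y)) :
    ∃ A B : ι → Finset V, (∀ i, Disjoint (A i) (B i)) ∧
      (∀ x y, x ≠ y → lam ≤ #{i | (x ∈ A i ∧ y ∈ B i) ∨ (x ∈ B i ∧ y ∈ A i)}) ∧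
      ∀ i, A i ∪ B i = univ := by
  refine ⟨fun i => {v | f v i = false}, fun i => {v | f v i = true}, fun i => ?_,
    fun x y hxy => (hf hxy).trans (card_le_card fun i => ?_), fun i => ?_⟩
  · exact disjoint_filter.2 fun v _ h => by simp [h]
  · cases hx : f x i <;> cases hy : f y i <;> simp [hx, hy]
  · ext v; cases f v i <;> simp

theorem sum_range_choose_le_exp_mul_div_pow {k r : ℕ} (hrk : r ≤ k) :
    ∑ i ∈ range (r + 1), (k.choose i : ℝ) ≤ (exp 1 * k / r) ^ r := by
  rcases Nat.eq_zero_or_pos r with rfl | hr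
  · simp
  have hr' : (0 : ℝ) < r := by exact_mod_cast hr
  have hkr : 1 ≤ (k / r : ℝ) := (one_le_div hr').2 (by exact_mod_cast hrk)
  calc ∑ i ∈ range (r + 1), (k.choose i : ℝ)
      ≤ ∑ i ∈ range (r + 1), (k / r : ℝ) ^ i * (r ^ i / i !) := by
        gcongr with i
        calc (k.choose i : ℝ) ≤ k ^ i / i ! := Nat.choose_le_pow_div i k
          _ = _ := by rw [mul_div_assoc', ← mul_pow, div_mul_cancel₀ _ hr'.ne']
    _ ≤ ∑ i ∈ range (r + 1), (k / r : ℝ) ^ r * (r ^ i / i !) := by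
        gcongr with i hi
        exact Nat.lt_succ_iff.1 (mem_range.1 hi)
    _ ≤ (k / r : ℝ) ^ r * exp r := by
        rw [← mul_sum]; gcongr; exact sum_le_exp_of_nonneg hr'.le _
    _ = (exp 1 * k / r) ^ r := by rw [← exp_one_pow, mul_div_assoc, mul_pow, mul_comm]

theorem mul_sum_range_choose_le_two_pow {n k r : ℕ} (hrk : r ≤ k)
    (h : logb 2 n + r * logb 2 (exp 1 * k / r) ≤ k) :
    n * ∑ i ∈ range (r + 1), k.choose i ≤ 2 ^ k := by
  rcases Nat.eq_zero_or_pos n with rfl | hn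
  · simp
  have hpow : 0 < (exp 1 * k / r) ^ r := by
    rcases Nat.eq_zero_or_pos r with rfl | hr
    · simp
    have : 0 < k := hr.trans_le hrk
    positivity
  have hlog : (n : ℝ) * (exp 1 * k / r) ^ r ≤ 2 ^ k := by
    rw [← rpow_natCast 2, ← logb_le_iff_le_rpow one_lt_two (by positivity),
      logb_mul (by positivity) hpow.ne', logb_pow]
    exact h
  exact_mod_cast (mul_le_mul_of_nonneg_left (sum_range_choose_le_exp_mul_div_pow hrk)
    n.cast_nonneg).trans hlog

theorem sub_one_le_logb_two_sub_one {x : ℝ} (hx : 2 ≤ x) : logb 2 x - 1 ≤ logb 2 (x - 1) :=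
  calc logb 2 x - 1 = logb 2 (x / 2) := by
        rw [logb_div (by linarith) two_ne_zero, logb_self_eq_one one_lt_two]
    _ ≤ logb 2 (x - 1) := logb_le_logb_of_le one_lt_two (by linarith) (by linarith)

theorem eventually_add_logb_le_mul (D : ℝ) {δ : ℝ} (hδ : 0 < δ) :
    ∀ᶠ t in atTop, D + logb 2 t ≤ δ * t := by
  have hlittle : (fun t => D + logb 2 t) =o[atTop] id :=
    (Asymptotics.isLittleO_const_id_atTop D).add
      (isLittleO_log_id_atTop.const_mul_left (log 2)⁻¹ |>.congr_left fun t => by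
        rw [logb, div_eq_inv_mul])
  filter_upwards [hlittle.def hδ, eventually_ge_atTop 0] with t ht ht₀
  simpa [abs_of_nonneg ht₀] using (le_abs_self _).trans ht

theorem logb_exp_mul_div_le {c C L k r : ℝ} (hL : 0 < L) (ht : 0 < logb 2 L) (hC : 0 < C)
    (hk₀ : 0 < k) (hk : k ≤ C * L * logb 2 L) (hr : L ^ c / 2 ≤ r) :
    logb 2 (exp 1 * k / r) ≤
      logb 2 (2 * exp 1 * C) + (1 - c) * logb 2 L + logb 2 (logb 2 L) := by
  have hr₀ : 0 < r := (half_pos (rpow_pos_of_pos hL c)).trans_le hr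
  have hbound : exp 1 * k / r ≤ 2 * exp 1 * C * L ^ (1 - c) * logb 2 L :=
    calc exp 1 * k / r ≤ exp 1 * (C * L * logb 2 L) / (L ^ c / 2) := by gcongr
      _ = 2 * exp 1 * C * L ^ (1 - c) * logb 2 L := by
        rw [rpow_sub hL, rpow_one]; field_simp
  calc logb 2 (exp 1 * k / r)
      ≤ logb 2 (2 * exp 1 * C * L ^ (1 - c) * logb 2 L) :=
        logb_le_logb_of_le one_lt_two (by positivity) hbound
    _ = _ := by
        rw [logb_mul (by positivity) ht.ne', logb_mul (by positivity) (by positivity),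
          logb_rpow_eq_mul_logb_of_pos hL]

theorem eventually_exists_code_length {c ε : ℝ} (hc₁ : 1 / 2 ≤ c) (hc₂ : c ≤ 1) (hε : 0 < ε) :
    ∀ᶠ L : ℝ in atTop, ∀ lam : ℕ, lam = ⌊L ^ c⌋₊ → ∃ k : ℕ, lam - 1 ≤ k ∧
      L + ((lam - 1 : ℕ) : ℝ) * logb 2 (exp 1 * k / (lam - 1 : ℕ)) ≤ k ∧
      (k : ℝ) + 1 ≤ L + (c + ε) * lam * logb 2 L := by
  set C := c + ε / 2 + 2 with hC
  filter_upwards [eventually_ge_atTop 1, (tendsto_logb_atTop one_lt_two).eventually_ge_atTop 1,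
    (tendsto_rpow_atTop (by linarith : 0 < c)).eventually_ge_atTop (max 4 (8 / ε)),
    (tendsto_logb_atTop one_lt_two).eventually
      (eventually_add_logb_le_mul (logb 2 (2 * exp 1 * C)) (half_pos hε))] with L hL ht hLc hD
  intro lam hlam
  set t := logb 2 L
  have hLc₄ : 4 ≤ L ^ c := (le_max_left _ _).trans hLc
  have hLcε : 8 / ε ≤ L ^ c := (le_max_right _ _).trans hLc
  have hlam_gt : L ^ c - 1 < lam := hlam ▸ Nat.sub_one_lt_floor _
  have hlam_le : (lam : ℝ) ≤ L :=
    (hlam ▸ Nat.floor_le (by positivity)).trans (rpow_le_self_of_one_le hL hc₂)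
  have hlam₀ : 0 < lam := by exact_mod_cast (by linarith : (0 : ℝ) < lam)
  rw [Nat.cast_pred hlam₀]
  set z := L + (c + ε / 2) * lam * t with hz
  have hz_ge : L ≤ z := le_add_of_nonneg_right (by positivity)
  have hk_lt : (⌈z⌉₊ : ℝ) < z + 1 := Nat.ceil_lt_add_one (by linarith)
  refine ⟨⌈z⌉₊, ?_, ?_, ?_⟩
  · have : lam ≤ ⌈z⌉₊ := by exact_mod_cast hlam_le.trans (hz_ge.trans (Nat.le_ceil z))
    omega
  · have hk_le : (⌈z⌉₊ : ℝ) ≤ C * L * t := by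
      have hLt : L ≤ L * t := le_mul_of_one_le_right (by linarith) ht
      have : (c + ε / 2) * lam * t ≤ (c + ε / 2) * L * t := by gcongr
      have hCLt : C * L * t = (c + ε / 2) * L * t + 2 * (L * t) := by rw [hC]; ring
      linarith [hz]
    have hlog := logb_exp_mul_div_le (c := c) (r := lam - 1) (by linarith) (by linarith)
      (by positivity) (by linarith [Nat.le_ceil z]) hk_le (by linarith)
    have hrate : logb 2 (exp 1 * ⌈z⌉₊ / (lam - 1)) ≤ (c + ε / 2) * t := by
      have : (1 - c) * t ≤ c * t := by gcongr; linarith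
      linarith
    calc L + (lam - 1) * logb 2 (exp 1 * ⌈z⌉₊ / (lam - 1))
        ≤ L + lam * ((c + ε / 2) * t) := by
          gcongr L + ?_
          have hrate₀ : 0 ≤ (c + ε / 2) * t := by positivity
          nlinarith
      _ = z := by ring
      _ ≤ ⌈z⌉₊ := Nat.le_ceil z
  · have hlam_ε : 4 / ε ≤ lam := by linarith [show 8 / ε = 2 * (4 / ε) by ring]
    have : 2 ≤ ε / 2 * lam * t :=
      calc 2 = ε / 2 * (4 / ε) := by field_simp; norm_num
        _ ≤ ε / 2 * lam := by gcongr
        _ ≤ ε / 2 * lam * t := le_mul_of_one_le_right (by positivity) ht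
    linarith [hz]

theorem multigraph_cover_upper_bound_midrange (c : ℝ) (hc₁ : 1 / 2 ≤ c) (hc₂ : c ≤ 1)
    (ε : ℝ) (hε : 0 < ε) :
    ∃ N : ℕ, ∀ n : ℕ, N ≤ n → ∀ lam : ℕ, lam = ⌊(Real.logb 2 n) ^ c⌋₊ →
      ∃ (m : ℕ) (A B : Fin m → Finset (Fin n)),
        (∀ i, Disjoint (A i) (B i)) ∧
        (∀ x y : Fin n, x ≠ y →
          lam ≤ (Finset.univ.filter
            (fun i => (x ∈ A i ∧ y ∈ B i) ∨ (x ∈ B i ∧ y ∈ A i))).card) ∧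
        (∑ i, ((A i ∪ B i).card : ℝ)) ≤
          (n : ℝ) * (Real.logb 2 ((n : ℝ) - 1)
            + (c + ε) * (lam : ℝ) * Real.logb 2 (Real.logb 2 n)) := by
  obtain ⟨N, hN⟩ := eventually_atTop.1 <|
    (((tendsto_logb_atTop one_lt_two).comp tendsto_natCast_atTop_atTop).eventually
      (eventually_exists_code_length hc₁ hc₂ hε)).and (eventually_ge_atTop 2)
  refine ⟨N, fun n hn lam hlam => ?_⟩
  obtain ⟨hcode, hn₂⟩ := hN n hn
  obtain ⟨k, hrk, hGV, hk⟩ := hcode lam hlam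
  obtain ⟨f, hf⟩ := exists_binary_code_s5 (mul_sum_range_choose_le_two_pow hrk hGV)
  obtain ⟨A, B, hdisj, hsep, hspan⟩ := exists_bipartite_cover_of_le_hammingDist (lam := lam) f
    fun x y hxy => Nat.le_of_pred_lt (hf hxy)
  refine ⟨k, A, B, hdisj, hsep, ?_⟩
  have hlog := sub_one_le_logb_two_sub_one (x := n) (by exact_mod_cast hn₂)
  simp only [hspan, card_univ, Fintype.card_fin, sum_const, nsmul_eq_mul]
  rw [mul_comm]
  gcongr
  simp only [Function.comp_apply] at hk
  linarith
end

section
/- Suppose 0 < ε ≤ 1 and W = {W_1, W_2, …} is a countable collection of bipartite graphons, where each W_i is (A_i, B_i)-bipartite, such that ∫_{[0,1]²} min(1, Σ_i W_i(x,y)) dx dy ≥ 1 − ε. Then Σ_i m(A_i ∪ B_i) ≥ log₂(1/ε). -/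
/-!
For finitely many disjoint measurable pairs `(A i, B i)` in a probability space, pick for every
pair a side `s i` to avoid. The points avoiding all chosen sides form a set `Z_s` with
`Z_s ×ˢ Z_s` inside the set `C` of pairs that no `(A i, B i)` separates. Giving `x ∈ Z_s` the
weight `φ x = 2 ^ (-#{i | x ∉ A i ∪ B i})` makes the masses `P_s = ∫_{Z_s} φ` a probability
vector, and
  `μ²(C) ≥ ∑ P_s μ(Z_s) ≥ exp (∑ P_s log μ(Z_s)) ≥ 2 ^ (-∑ μ(A i ∪ B i))`:
the middle step is weighted AM-GM, the last one adds the entropy bound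
`∑ P_s log P_s ≥ -n log 2` to the log-sum inequalities `P_s log (P_s / μ(Z_s)) ≤ ∫_{Z_s} φ log φ`,
which sum to `∫ log φ = log 2 * ∑ (μ(A i ∪ B i) - 1)`. Continuity from above passes to countably
many pairs. A `(1 - ε)`-full separating system is supported on `Cᶜ`, so
`1 - ε ≤ 1 - 2 ^ (-∑ m(A i ∪ B i))`.
-/

open MeasureTheory Set Real

section WeightedMeans

variable {κ : Type*} [Fintype κ]

theorem neg_log_card_le_sum_mul_log {p : κ → ℝ} (hp : ∀ k, 0 ≤ p k) (hsum : ∑ k, p k = 1) :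
    -log (Fintype.card κ) ≤ ∑ k, p k * log (p k) := by
  have : Nonempty κ := by
    by_contra h
    simp [not_nonempty_iff.mp h] at hsum
  have hK : (0 : ℝ) < Fintype.card κ := by exact_mod_cast Fintype.card_pos
  have jensen := concaveOn_negMulLog.le_map_sum (t := Finset.univ)
    (w := fun _ => (Fintype.card κ : ℝ)⁻¹) (p := p) (fun _ _ => by positivity)
    (by simp [Finset.card_univ, hK.ne']) (fun k _ => hp k)
  simp only [smul_eq_mul, ← Finset.mul_sum, hsum, mul_one] at jensen
  rw [show negMulLog (Fintype.card κ : ℝ)⁻¹ = (Fintype.card κ : ℝ)⁻¹ * log (Fintype.card κ) by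
    simp [negMulLog, log_inv]] at jensen
  have := le_of_mul_le_mul_left jensen (inv_pos.mpr hK)
  simp only [negMulLog, neg_mul, Finset.sum_neg_distrib] at this
  linarith

theorem exp_sum_mul_log_le_sum_mul {p m : κ → ℝ} (hp : ∀ k, 0 ≤ p k) (hsum : ∑ k, p k = 1)
    (hm : ∀ k, 0 ≤ m k) (hpm : ∀ k, m k = 0 → p k = 0) :
    exp (∑ k, p k * log (m k)) ≤ ∑ k, p k * m k := by
  calc exp (∑ k, p k * log (m k)) = ∏ k, m k ^ p k := by
        rw [exp_sum]
        refine Finset.prod_congr rfl fun k _ => ?_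
        rcases (hm k).eq_or_lt with h | h
        · simp [← h, hpm k h.symm]
        · rw [rpow_def_of_pos h, mul_comm]
    _ ≤ ∑ k, p k * m k :=
        geom_mean_le_arith_mean_weighted _ _ _ (fun k _ => hp k) hsum (fun k _ => hm k)

end WeightedMeans

theorem mul_log_div_measureReal_le_setIntegral {α : Type*} [MeasurableSpace α] {μ : Measure α}
    {f : α → ℝ} {t : Set α} (ht : μ t ≠ ⊤) (hf : ∀ x, 0 ≤ f x) (hfi : IntegrableOn f t μ)
    (hfl : IntegrableOn (fun x => f x * log (f x)) t μ) :
    (∫ x in t, f x ∂μ) * log ((∫ x in t, f x ∂μ) / μ.real t) ≤ ∫ x in t, f x * log (f x) ∂μ := by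
  rcases eq_or_ne (μ t) 0 with h0 | h0
  · simp [Measure.restrict_eq_zero.mpr h0]
  have hM : 0 < μ.real t := ENNReal.toReal_pos h0 ht
  have jensen := convexOn_mul_log.map_set_average_le continuous_mul_log.continuousOn isClosed_Ici
    h0 ht (Filter.Eventually.of_forall fun x => hf x) hfi hfl
  simp only [setAverage_eq, smul_eq_mul, inv_mul_eq_div] at jensen
  have := mul_le_mul_of_nonneg_left jensen hM.le
  rwa [mul_div_cancel₀ _ hM.ne', ← mul_assoc, mul_div_cancel₀ _ hM.ne'] at this

section Hansel

variable {α ι : Type*} {A B : ι → Set α}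

def compatiblePairs (A B : ι → Set α) : Set (α × α) := ⋂ i, (A i ×ˢ B i ∪ B i ×ˢ A i)ᶜ

def avoidingSet (A B : ι → Set α) (s : ι → Bool) : Set α := ⋂ i, (bif s i then B i else A i)ᶜ

open Classical in
/-- A point `x` lies in `2 ^ #{i | x ∉ A i ∪ B i}` of the sets `avoidingSet A B s`, so weighting
them by this density gives a partition of unity (`sum_indicator_avoidingSet_hanselDensity`). -/
noncomputable def hanselDensity [Fintype ι] (A B : ι → Set α) (x : α) : ℝ :=
  ∏ i, if x ∈ A i ∪ B i then 1 else 2⁻¹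

theorem avoidingSet_prod_subset_compatiblePairs (s : ι → Bool) :
    avoidingSet A B s ×ˢ avoidingSet A B s ⊆ compatiblePairs A B := by
  rintro ⟨x, y⟩ ⟨hx, hy⟩
  simp only [avoidingSet, mem_iInter, mem_compl_iff] at hx hy
  simp only [compatiblePairs, mem_iInter, mem_compl_iff, mem_union, mem_prod, not_or, not_and]
  intro i
  have hxi := hx i
  have hyi := hy i
  cases h : s i <;> simp only [h, cond_true, cond_false] at hxi hyi <;> tauto

section Density

variable [Fintype ι]

theorem hanselDensity_pos (x : α) : 0 < hanselDensity A B x :=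
  Finset.prod_pos fun i _ => by split_ifs <;> norm_num

theorem hanselDensity_le_one (x : α) : hanselDensity A B x ≤ 1 :=
  Finset.prod_le_one (fun i _ => by split_ifs <;> norm_num) fun i _ => by split_ifs <;> norm_num

theorem norm_hanselDensity_le_one (x : α) : ‖hanselDensity A B x‖ ≤ 1 := by
  rw [Real.norm_of_nonneg (hanselDensity_pos x).le]
  exact hanselDensity_le_one x

theorem log_hanselDensity (x : α) :
    log (hanselDensity A B x) = ∑ i, (A i ∪ B i)ᶜ.indicator (fun _ => -log 2) x := by
  rw [hanselDensity, log_prod fun i _ => by split_ifs <;> norm_num]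
  refine Finset.sum_congr rfl fun i _ => ?_
  by_cases hx : x ∈ A i ∪ B i
  · rw [if_pos hx, log_one, indicator_of_notMem (notMem_compl_iff.mpr hx)]
  · rw [if_neg hx, log_inv, indicator_of_mem (mem_compl hx)]

theorem sum_indicator_avoidingSet_hanselDensity [DecidableEq ι]
    (hd : ∀ i, Disjoint (A i) (B i)) (x : α) :
    ∑ s, (avoidingSet A B s).indicator (hanselDensity A B) x = 1 := by
  classical
  set side : ι → Bool → ℝ := fun i b =>
    if x ∈ (bif b then B i else A i) then 0 else if x ∈ A i ∪ B i then 1 else 2⁻¹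
  have hside : ∀ s, (avoidingSet A B s).indicator (hanselDensity A B) x = ∏ i, side i (s i) := by
    intro s
    by_cases hx : x ∈ avoidingSet A B s
    · rw [indicator_of_mem hx, hanselDensity]
      simp only [avoidingSet, mem_iInter, mem_compl_iff] at hx
      exact Finset.prod_congr rfl fun i _ => by simp [side, hx i]
    · rw [indicator_of_notMem hx]
      simp only [avoidingSet, mem_iInter, mem_compl_iff, not_forall, not_not] at hx
      obtain ⟨i, hi⟩ := hx
      exact (Finset.prod_eq_zero (Finset.mem_univ i) (by simp [side, hi])).symm
  simp only [hside]
  rw [← Fintype.prod_sum]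
  refine Finset.prod_eq_one fun i _ => ?_
  have := (hd i).notMem_of_mem_left (a := x)
  by_cases ha : x ∈ A i <;> by_cases hb : x ∈ B i <;> simp_all [side]; norm_num

end Density

variable [MeasurableSpace α]

theorem measurableSet_avoidingSet [Countable ι] (hA : ∀ i, MeasurableSet (A i))
    (hB : ∀ i, MeasurableSet (B i)) (s : ι → Bool) : MeasurableSet (avoidingSet A B s) :=
  .iInter fun i => by cases h : s i <;> simp [hA i, hB i]

theorem measurableSet_compatiblePairs [Countable ι] (hA : ∀ i, MeasurableSet (A i))
    (hB : ∀ i, MeasurableSet (B i)) : MeasurableSet (compatiblePairs A B) :=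
  .iInter fun i => (((hA i).prod (hB i)).union ((hB i).prod (hA i))).compl

theorem measurable_hanselDensity [Fintype ι] (hA : ∀ i, MeasurableSet (A i))
    (hB : ∀ i, MeasurableSet (B i)) : Measurable (hanselDensity A B) :=
  Finset.measurable_prod _ fun i _ => Measurable.ite ((hA i).union (hB i)) measurable_const
    measurable_const

variable {μ : Measure α} [Fintype ι]

theorem integrable_hanselDensity [IsFiniteMeasure μ] (hA : ∀ i, MeasurableSet (A i))
    (hB : ∀ i, MeasurableSet (B i)) : Integrable (hanselDensity A B) μ :=
  .of_bound (measurable_hanselDensity hA hB).aestronglyMeasurable 1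
    (ae_of_all _ norm_hanselDensity_le_one)

theorem integrable_hanselDensity_mul (hA : ∀ i, MeasurableSet (A i))
    (hB : ∀ i, MeasurableSet (B i)) {g : α → ℝ} (hg : Integrable g μ) :
    Integrable (fun x => hanselDensity A B x * g x) μ :=
  hg.bdd_mul (measurable_hanselDensity hA hB).aestronglyMeasurable
    (ae_of_all _ norm_hanselDensity_le_one)

theorem sum_setIntegral_avoidingSet_hanselDensity_mul [DecidableEq ι]
    (hA : ∀ i, MeasurableSet (A i)) (hB : ∀ i, MeasurableSet (B i))
    (hd : ∀ i, Disjoint (A i) (B i)) {g : α → ℝ} (hg : Integrable g μ) :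
    ∑ s, ∫ x in avoidingSet A B s, hanselDensity A B x * g x ∂μ = ∫ x, g x ∂μ := by
  have hφg := integrable_hanselDensity_mul hA hB hg
  simp_rw [← integral_indicator (measurableSet_avoidingSet hA hB _)]
  rw [← integral_finsetSum _ fun s _ => hφg.indicator (measurableSet_avoidingSet hA hB s)]
  congr 1 with x
  simp_rw [indicator_mul_left, ← Finset.sum_mul, sum_indicator_avoidingSet_hanselDensity hd,
    one_mul]

theorem integral_log_hanselDensity [IsProbabilityMeasure μ] (hA : ∀ i, MeasurableSet (A i))
    (hB : ∀ i, MeasurableSet (B i)) :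
    ∫ x, log (hanselDensity A B x) ∂μ =
      log 2 * ∑ i, μ.real (A i ∪ B i) - Fintype.card ι * log 2 := by
  have hAB i : MeasurableSet (A i ∪ B i) := (hA i).union (hB i)
  simp_rw [log_hanselDensity]
  rw [integral_finsetSum _ fun i _ => (integrable_const _).indicator (hAB i).compl]
  simp_rw [integral_indicator_const _ (hAB _).compl, probReal_compl_eq_one_sub (hAB _),
    smul_eq_mul]
  rw [Finset.mul_sum, ← Finset.card_univ, ← nsmul_eq_mul, ← Finset.sum_const,
    ← Finset.sum_sub_distrib]
  exact Finset.sum_congr rfl fun i _ => by ring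

theorem sum_setIntegral_mul_measureReal_avoidingSet_le [IsProbabilityMeasure μ] [DecidableEq ι]
    (hA : ∀ i, MeasurableSet (A i)) (hB : ∀ i, MeasurableSet (B i))
    (hd : ∀ i, Disjoint (A i) (B i)) :
    ∑ s, (∫ x in avoidingSet A B s, hanselDensity A B x ∂μ) * μ.real (avoidingSet A B s) ≤
      (μ.prod μ).real (compatiblePairs A B) := by
  have hC := measurableSet_compatiblePairs hA hB
  have hsect_int := Measure.integrable_measure_prodMk_left (μ := μ) (ν := μ) hC (measure_ne_top _ _)
  have hprod : (μ.prod μ).real (compatiblePairs A B) =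
      ∫ x, μ.real (Prod.mk x ⁻¹' compatiblePairs A B) ∂μ := by
    rw [measureReal_def, Measure.prod_apply hC, ← integral_toReal
      (measurable_measure_prodMk_left hC).aemeasurable (ae_of_all _ fun _ => measure_lt_top _ _)]
    rfl
  rw [hprod, ← sum_setIntegral_avoidingSet_hanselDensity_mul hA hB hd hsect_int]
  refine Finset.sum_le_sum fun s _ => ?_
  have hZ := measurableSet_avoidingSet hA hB s
  rw [← integral_mul_const]
  refine setIntegral_mono_on ?_ ?_ hZ fun x hx => ?_
  · exact (integrable_hanselDensity_mul hA hB (integrable_const _)).integrableOn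
  · exact (integrable_hanselDensity_mul hA hB hsect_int).integrableOn
  · refine mul_le_mul_of_nonneg_left (measureReal_mono fun y hy => ?_) (hanselDensity_pos x).le
    exact avoidingSet_prod_subset_compatiblePairs s ⟨hx, hy⟩

theorem sum_mul_log_div_le_integral_log_hanselDensity [IsProbabilityMeasure μ] [DecidableEq ι]
    (hA : ∀ i, MeasurableSet (A i)) (hB : ∀ i, MeasurableSet (B i))
    (hd : ∀ i, Disjoint (A i) (B i)) :
    ∑ s, (∫ x in avoidingSet A B s, hanselDensity A B x ∂μ) *
        log ((∫ x in avoidingSet A B s, hanselDensity A B x ∂μ) / μ.real (avoidingSet A B s)) ≤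
      ∫ x, log (hanselDensity A B x) ∂μ := by
  have hlog : Integrable (fun x => log (hanselDensity A B x)) μ := by
    simp_rw [log_hanselDensity]
    exact integrable_finsetSum _ fun i _ =>
      (integrable_const _).indicator ((hA i).union (hB i)).compl
  rw [← sum_setIntegral_avoidingSet_hanselDensity_mul hA hB hd hlog]
  exact Finset.sum_le_sum fun s _ => mul_log_div_measureReal_le_setIntegral (measure_ne_top _ _)
    (fun x => (hanselDensity_pos x).le) (integrable_hanselDensity hA hB).integrableOn
    (integrable_hanselDensity_mul hA hB hlog).integrableOn

theorem hansel_finite [IsProbabilityMeasure μ] (hA : ∀ i, MeasurableSet (A i))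
    (hB : ∀ i, MeasurableSet (B i)) (hd : ∀ i, Disjoint (A i) (B i)) :
    (2 : ℝ) ^ (-∑ i, μ.real (A i ∪ B i)) ≤ (μ.prod μ).real (compatiblePairs A B) := by
  classical
  set P : (ι → Bool) → ℝ := fun s => ∫ x in avoidingSet A B s, hanselDensity A B x ∂μ
  set M : (ι → Bool) → ℝ := fun s => μ.real (avoidingSet A B s)
  have hP_nonneg s : 0 ≤ P s := setIntegral_nonneg (measurableSet_avoidingSet hA hB s)
    fun x _ => (hanselDensity_pos x).le
  have hP_sum : ∑ s, P s = 1 := by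
    simpa using sum_setIntegral_avoidingSet_hanselDensity_mul hA hB hd
      (integrable_const (μ := μ) (1 : ℝ))
  have hPM s (h : M s = 0) : P s = 0 := by
    simp [P, Measure.restrict_eq_zero.mpr ((measureReal_eq_zero_iff).mp h)]
  have hentropy : -(Fintype.card ι * log 2) ≤ ∑ s, P s * log (P s) := by
    simpa [Fintype.card_fun, log_pow] using neg_log_card_le_sum_mul_log hP_nonneg hP_sum
  have hlogsum := sum_mul_log_div_le_integral_log_hanselDensity (μ := μ) hA hB hd
  rw [integral_log_hanselDensity hA hB] at hlogsum
  have hsplit : ∑ s, P s * log (M s) = ∑ s, P s * log (P s) - ∑ s, P s * log (P s / M s) := by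
    rw [← Finset.sum_sub_distrib]
    refine Finset.sum_congr rfl fun s _ => ?_
    rcases eq_or_ne (P s) 0 with h | h
    · simp [h]
    · rw [log_div h fun h' => h (hPM s h')]
      ring
  calc (2 : ℝ) ^ (-∑ i, μ.real (A i ∪ B i)) = exp (log 2 * -∑ i, μ.real (A i ∪ B i)) :=
        rpow_def_of_pos two_pos _
    _ ≤ exp (∑ s, P s * log (M s)) := exp_le_exp.mpr (by linarith)
    _ ≤ ∑ s, P s * M s :=
        exp_sum_mul_log_le_sum_mul hP_nonneg hP_sum (fun s => measureReal_nonneg) hPM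
    _ ≤ (μ.prod μ).real (compatiblePairs A B) :=
        sum_setIntegral_mul_measureReal_avoidingSet_le hA hB hd

end Hansel

section Graphon

variable {α : Type*} [MeasurableSpace α] {μ : Measure α}

theorem hansel_countable [IsProbabilityMeasure μ] {A B : ℕ → Set α}
    (hA : ∀ i, MeasurableSet (A i)) (hB : ∀ i, MeasurableSet (B i))
    (hd : ∀ i, Disjoint (A i) (B i)) (hsum : Summable fun i => μ.real (A i ∪ B i)) :
    ENNReal.ofReal (2 ^ (-∑' i, μ.real (A i ∪ B i))) ≤ μ.prod μ (compatiblePairs A B) := by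
  set C : ℕ → Set (α × α) := fun n =>
    compatiblePairs (fun i : Fin n => A i) (fun i : Fin n => B i)
  have hC_anti : Antitone C := fun m n hmn p hp => by
    simp only [C, compatiblePairs, mem_iInter] at hp ⊢
    exact fun i => hp (Fin.castLE hmn i)
  have hC_iInter : ⋂ n, C n = compatiblePairs A B := by
    ext p
    simp only [C, compatiblePairs, mem_iInter]
    exact ⟨fun h i => h (i + 1) ⟨i, i.lt_succ_self⟩, fun h n i => h i⟩
  have hC_meas n : MeasurableSet (C n) :=
    measurableSet_compatiblePairs (fun i : Fin n => hA i) (fun i : Fin n => hB i)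
  rw [← hC_iInter, hC_anti.measure_iInter (fun n => (hC_meas n).nullMeasurableSet)
    ⟨0, measure_ne_top _ _⟩]
  refine le_iInf fun n => (ENNReal.ofReal_le_iff_le_toReal (measure_ne_top _ _)).mpr ?_
  refine le_trans (rpow_le_rpow_of_exponent_le one_le_two ?_)
    (hansel_finite (fun i => hA i) (fun i => hB i) (fun i => hd i))
  rw [neg_le_neg_iff, Fin.sum_univ_eq_sum_range (fun i => μ.real (A i ∪ B i))]
  exact hsum.sum_le_tsum _ fun i _ => measureReal_nonneg

theorem ae_mem_prod_sdiff_of_measure_inter_eq_zero [SFinite μ] {A B : Set α}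
    (hAB : μ (A ∩ B) = 0) :
    ∀ᵐ p ∂μ.prod μ, p ∈ A ×ˢ B ∪ B ×ˢ A → p ∈ A ×ˢ (B \ A) ∪ (B \ A) ×ˢ A := by
  have hnull : μ.prod μ (univ ×ˢ (A ∩ B) ∪ (A ∩ B) ×ˢ univ) = 0 :=
    measure_union_null (by rw [Measure.prod_prod, hAB, mul_zero])
      (by rw [Measure.prod_prod, hAB, zero_mul])
  filter_upwards [measure_eq_zero_iff_ae_notMem.mp hnull] with ⟨x, y⟩ hp
  simp only [mem_union, mem_prod, mem_inter_iff, mem_univ, true_and, and_true, not_or,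
    not_and, mem_sdiff] at hp ⊢
  tauto

theorem lintegral_min_one_tsum_le_measure_compl_compatiblePairs {ι : Type*} [Countable ι]
    {ν : Measure (α × α)} {A B : ι → Set α} {W : ι → α → α → ℝ}
    (hW : ∀ i, ∀ᵐ p ∂ν, W i p.1 p.2 ≠ 0 → p ∈ A i ×ˢ B i ∪ B i ×ˢ A i) :
    ∫⁻ p, min 1 (∑' i, ENNReal.ofReal (W i p.1 p.2)) ∂ν ≤ ν (compatiblePairs A B)ᶜ := by
  refine le_trans (lintegral_mono_ae ?_) (lintegral_indicator_one_le _)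
  filter_upwards [ae_all_iff.mpr hW] with p hp
  by_cases hC : p ∈ compatiblePairs A B
  · have hzero i : W i p.1 p.2 = 0 := by_contra fun h => mem_iInter.mp hC i (hp i h)
    simp [hzero]
  · rw [indicator_of_mem hC]
    exact min_le_left _ _

theorem lintegral_min_one_tsum_le_one_sub_rpow [IsProbabilityMeasure μ] {A B : ℕ → Set α}
    {W : ℕ → α → α → ℝ} (hA : ∀ i, MeasurableSet (A i)) (hB : ∀ i, MeasurableSet (B i))
    (hAB : ∀ i, μ (A i ∩ B i) = 0)
    (hW : ∀ i, ∀ᵐ p ∂μ.prod μ, W i p.1 p.2 ≠ 0 → p ∈ A i ×ˢ B i ∪ B i ×ˢ A i)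
    (hsum : Summable fun i => μ.real (A i ∪ B i)) :
    ∫⁻ p, min 1 (∑' i, ENNReal.ofReal (W i p.1 p.2)) ∂μ.prod μ ≤
      1 - ENNReal.ofReal (2 ^ (-∑' i, μ.real (A i ∪ B i))) := by
  set B' : ℕ → Set α := fun i => B i \ A i
  have hB' i : MeasurableSet (B' i) := (hB i).diff (hA i)
  have hW' i : ∀ᵐ p ∂μ.prod μ, W i p.1 p.2 ≠ 0 → p ∈ A i ×ˢ B' i ∪ B' i ×ˢ A i := by
    filter_upwards [hW i, ae_mem_prod_sdiff_of_measure_inter_eq_zero (hAB i)] with p h1 h2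
      using fun h => h2 (h1 h)
  have hunion i : A i ∪ B' i = A i ∪ B i := union_sdiff_self
  have hhansel := hansel_countable hA hB' (fun i => disjoint_sdiff_right)
    (by simpa only [hunion] using hsum)
  simp only [hunion] at hhansel
  calc ∫⁻ p, min 1 (∑' i, ENNReal.ofReal (W i p.1 p.2)) ∂μ.prod μ
      ≤ μ.prod μ (compatiblePairs A B')ᶜ :=
        lintegral_min_one_tsum_le_measure_compl_compatiblePairs hW'
    _ = 1 - μ.prod μ (compatiblePairs A B') :=
        prob_compl_eq_one_sub (measurableSet_compatiblePairs hA hB')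
    _ ≤ 1 - ENNReal.ofReal (2 ^ (-∑' i, μ.real (A i ∪ B i))) := tsub_le_tsub_left hhansel 1

end Graphon

theorem logb_one_div_le_of_ofReal_one_sub_le {ε x : ℝ} (hx : 0 ≤ x)
    (h : ENNReal.ofReal (1 - ε) ≤ 1 - ENNReal.ofReal (2 ^ (-x))) : logb 2 (1 / ε) ≤ x := by
  have hpow_le_one : (2 : ℝ) ^ (-x) ≤ 1 := rpow_le_one_of_one_le_of_nonpos one_le_two (by linarith)
  rw [← ENNReal.ofReal_one, ← ENNReal.ofReal_sub _ (rpow_nonneg zero_le_two _),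
    ENNReal.ofReal_le_ofReal_iff'] at h
  have hpow_le : (2 : ℝ) ^ (-x) ≤ ε := by rcases h with h | h <;> linarith
  have hε : 0 < ε := (rpow_pos_of_pos two_pos _).trans_le hpow_le
  rw [one_div, logb_inv, neg_le, le_logb_iff_rpow_le one_lt_two hε]
  exact hpow_le

theorem graphon_hansel_unweighted_general (ε : ℝ)
    (W : ℕ → ℝ → ℝ → ℝ) (A B : ℕ → Set ℝ)
    (hAmeas : ∀ i, MeasurableSet (A i)) (hBmeas : ∀ i, MeasurableSet (B i))
    (hABdisj : ∀ i, volume (A i ∩ B i) = 0)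
    (hbip : ∀ i, volume ({p : ℝ × ℝ | p ∈ Set.Icc (0 : ℝ) 1 ×ˢ Set.Icc (0 : ℝ) 1
        ∧ W i p.1 p.2 ≠ 0} \ ((A i ×ˢ B i) ∪ (B i ×ˢ A i))) = 0)
    (hfull : ENNReal.ofReal (1 - ε) ≤
      ∫⁻ p in (Set.Icc (0 : ℝ) 1 ×ˢ Set.Icc (0 : ℝ) 1),
        min 1 (∑' i, ENNReal.ofReal (W i p.1 p.2))) :
    ENNReal.ofReal (Real.logb 2 (1 / ε)) ≤ ∑' i, volume (A i ∪ B i) := by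
  set μ : Measure ℝ := volume.restrict (Icc 0 1)
  have : IsProbabilityMeasure μ := ⟨by simp [μ]⟩
  have hbox : μ.prod μ = volume.restrict (Icc (0 : ℝ) 1 ×ˢ Icc (0 : ℝ) 1) := by
    rw [Measure.prod_restrict, ← Measure.volume_eq_prod]
  have hμ_le (s : Set ℝ) : μ s ≤ volume s := Measure.restrict_le_self s
  by_cases htop : ∑' i, volume (A i ∪ B i) = ⊤
  · simp [htop]
  have hμ_top : ∑' i, μ (A i ∪ B i) ≠ ⊤ :=
    ne_top_of_le_ne_top htop (ENNReal.tsum_le_tsum fun i => hμ_le _)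
  have hW i : ∀ᵐ p ∂μ.prod μ, W i p.1 p.2 ≠ 0 → p ∈ A i ×ˢ B i ∪ B i ×ˢ A i := by
    rw [hbox, ae_restrict_iff' (measurableSet_Icc.prod measurableSet_Icc)]
    filter_upwards [measure_eq_zero_iff_ae_notMem.mp (hbip i)] with p hp hp_box hWp
    by_contra h
    exact hp ⟨⟨hp_box, hWp⟩, h⟩
  have hfull' := hfull.trans_eq (congrArg (lintegral · _) hbox.symm) |>.trans
    (lintegral_min_one_tsum_le_one_sub_rpow hAmeas hBmeas
      (fun i => nonpos_iff_eq_zero.mp ((hμ_le _).trans (hABdisj i).le)) hW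
      (ENNReal.summable_toReal hμ_top))
  calc ENNReal.ofReal (Real.logb 2 (1 / ε)) ≤ ENNReal.ofReal (∑' i, μ.real (A i ∪ B i)) :=
        ENNReal.ofReal_le_ofReal
          (logb_one_div_le_of_ofReal_one_sub_le (tsum_nonneg fun _ => measureReal_nonneg) hfull')
    _ = ∑' i, μ (A i ∪ B i) := by
        simp_rw [measureReal_def]
        rw [← ENNReal.tsum_toReal_eq fun _ => measure_ne_top _ _, ENNReal.ofReal_toReal hμ_top]
    _ ≤ ∑' i, volume (A i ∪ B i) := ENNReal.tsum_le_tsum fun i => hμ_le _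

theorem graphon_hansel_unweighted (ε : ℝ) (hε₀ : 0 < ε) (hε₁ : ε ≤ 1)
    (W : ℕ → ℝ → ℝ → ℝ) (A B : ℕ → Set ℝ)
    (hWmeas : ∀ i, Measurable (Function.uncurry (W i)))
    (hWsymm : ∀ i x y, W i x y = W i y x)
    (hWrange : ∀ i x y, W i x y ∈ Set.Icc (0 : ℝ) 1)
    (hAmeas : ∀ i, MeasurableSet (A i)) (hBmeas : ∀ i, MeasurableSet (B i))
    (hAsub : ∀ i, A i ⊆ Set.Icc (0 : ℝ) 1) (hBsub : ∀ i, B i ⊆ Set.Icc (0 : ℝ) 1)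
    (hABdisj : ∀ i, volume (A i ∩ B i) = 0)
    (hbip : ∀ i, volume ({p : ℝ × ℝ | p ∈ Set.Icc (0 : ℝ) 1 ×ˢ Set.Icc (0 : ℝ) 1
        ∧ W i p.1 p.2 ≠ 0} \ ((A i ×ˢ B i) ∪ (B i ×ˢ A i))) = 0)
    (hfull : ENNReal.ofReal (1 - ε) ≤
      ∫⁻ p in (Set.Icc (0 : ℝ) 1 ×ˢ Set.Icc (0 : ℝ) 1),
        min 1 (∑' i, ENNReal.ofReal (W i p.1 p.2))) :
    ENNReal.ofReal (Real.logb 2 (1 / ε)) ≤ ∑' i, volume (A i ∪ B i) :=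
  graphon_hansel_unweighted_general ε W A B hAmeas hBmeas hABdisj hbip hfull
end

section
/- Let α > 1 be a real number. For every multigraph G there exists a simple bipartite subgraph H of G such that for every vertex v ∈ V(G), the α-exponential degree satisfies d^ex_{G−H}(α, v) ≤ (1/2)(1 + α⁻¹)·d^ex_G(α, v). In particular, Δ^ex(α, G−H) ≤ (1/2)(1 + α⁻¹)·Δ^ex(α, G). -/
/-- The `α`-exponential degree of a vertex `v` in the multigraph with multiplicity
function `G`: `d^ex_G(α, v) = ∑_{u ∈ N(v)} α^{μ(uv)}` (only actual neighbours, i.e.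
vertices `u` with `G v u ≥ 1`, contribute). -/
noncomputable def expDeg {V : Type*} [Fintype V] (α : ℝ) (G : V → V → ℕ) (v : V) : ℝ :=
  ∑ u ∈ Finset.univ.filter (fun u => 0 < G v u), α ^ (G v u)

/-!
Weight each pair `u, v` by `α ^ μ(uv)` (and `0` for non-adjacent pairs) and take a vertex set
`S` maximising the weight of the cut `(S, Sᶜ)`; `H` takes one copy of every edge crossing it.
Moving a single vertex to the other side cannot increase the cut, so the weight `D` a vertex
sends to its own side is at most the weight `C` it sends across. Removing one copy of a
crossing edge multiplies its term by `α⁻¹` (or deletes it), hence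
`d^ex_{G−H}(α, v) ≤ α⁻¹ C + D ≤ ½ (1 + α⁻¹) (C + D) = ½ (1 + α⁻¹) d^ex_G(α, v)`.
-/

open Finset

namespace MaxCut

variable {V R : Type*} [Fintype V] [DecidableEq V] [AddCommMonoid R]

def cutWeight (w : V → V → R) (S : Finset V) : R := ∑ x ∈ S, ∑ y ∈ Sᶜ, w x y

theorem cutWeight_compl {w : V → V → R} (hw : ∀ x y, w x y = w y x) (S : Finset V) :
    cutWeight w Sᶜ = cutWeight w S := by
  rw [cutWeight, cutWeight, compl_compl, sum_comm]
  simp only [hw]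

variable [LinearOrder R]

def IsMaxCut (w : V → V → R) (S : Finset V) : Prop := ∀ T, cutWeight w T ≤ cutWeight w S

theorem exists_isMaxCut (w : V → V → R) : ∃ S, IsMaxCut w S := by
  obtain ⟨S, -, hS⟩ := exists_max_image univ (cutWeight w) univ_nonempty
  exact ⟨S, fun T => hS T (mem_univ T)⟩

theorem IsMaxCut.compl {w : V → V → R} {S : Finset V} (hS : IsMaxCut w S)
    (hw : ∀ x y, w x y = w y x) : IsMaxCut w Sᶜ := by
  simpa only [IsMaxCut, cutWeight_compl hw] using hS

variable [IsOrderedCancelAddMonoid R] {w : V → V → R} {S : Finset V}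

theorem IsMaxCut.sum_le_sum_compl (hS : IsMaxCut w S) (hw : ∀ x y, w x y = w y x)
    (hloop : ∀ v, w v v = 0) {v : V} (hv : v ∈ S) :
    ∑ u ∈ S, w v u ≤ ∑ u ∈ Sᶜ, w v u := by
  have hv' : v ∉ Sᶜ := by simpa using hv
  have hcut : cutWeight w S = ∑ y ∈ Sᶜ, w v y + ∑ x ∈ S.erase v, ∑ y ∈ Sᶜ, w x y :=
    (add_sum_erase _ _ hv).symm
  have hcut_erase : cutWeight w (S.erase v)
      = ∑ x ∈ S.erase v, w x v + ∑ x ∈ S.erase v, ∑ y ∈ Sᶜ, w x y := by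
    simp only [cutWeight, compl_erase, sum_insert hv', sum_add_distrib]
  have hmoved : ∑ x ∈ S.erase v, w x v ≤ ∑ y ∈ Sᶜ, w v y := by
    have := hS (S.erase v)
    rwa [hcut, hcut_erase, add_le_add_iff_right] at this
  calc ∑ u ∈ S, w v u = w v v + ∑ u ∈ S.erase v, w v u := (add_sum_erase _ _ hv).symm
    _ = ∑ u ∈ S.erase v, w u v := by rw [hloop, zero_add]; simp only [hw v]
    _ ≤ ∑ u ∈ Sᶜ, w v u := hmoved

theorem IsMaxCut.sum_sameSide_le_sum_otherSide (hS : IsMaxCut w S)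
    (hw : ∀ x y, w x y = w y x) (hloop : ∀ v, w v v = 0) (v : V) :
    ∑ u with ¬(v ∈ S ↔ u ∉ S), w v u ≤ ∑ u with (v ∈ S ↔ u ∉ S), w v u := by
  wlog hv : v ∈ S generalizing S
  · have := this (hS.compl hw) (by simpa using hv)
    simp only [mem_compl, not_not] at this
    convert this using 3 <;> tauto
  have hsame : ({u | ¬(v ∈ S ↔ u ∉ S)} : Finset V) = S := by ext u; simp [hv]
  have hother : ({u | v ∈ S ↔ u ∉ S} : Finset V) = Sᶜ := by ext u; simp [hv]
  rw [hsame, hother]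
  exact hS.sum_le_sum_compl hw hloop hv

end MaxCut

def expWeight (α : ℝ) (m : ℕ) : ℝ := if 0 < m then α ^ m else 0

@[simp] theorem expWeight_zero (α : ℝ) : expWeight α 0 = 0 := by simp [expWeight]

theorem expWeight_pred_le (α : ℝ) (m : ℕ) : expWeight α (m - 1) ≤ α⁻¹ * expWeight α m := by
  rcases m with _ | _ | k
  · simp
  · by_cases hα : α = 0 <;> simp [expWeight, hα]
  · by_cases hα : α = 0
    · simp [expWeight, hα]
    · simp [expWeight, pow_succ' α (k + 1), hα]

theorem expDeg_eq_sum_expWeight {V : Type*} [Fintype V] (α : ℝ) (G : V → V → ℕ) (v : V) :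
    expDeg α G v = ∑ u, expWeight α (G v u) := by
  simp only [expDeg, expWeight, sum_filter]

theorem mul_add_le_half_one_add_mul_add {t C D : ℝ} (ht : t ≤ 1) (hDC : D ≤ C) :
    t * C + D ≤ 1 / 2 * (1 + t) * (C + D) := by
  nlinarith [mul_nonneg (sub_nonneg.2 ht) (sub_nonneg.2 hDC)]

section CrossingSubgraph

variable {V : Type*} [DecidableEq V] (G : V → V → ℕ) (S : Finset V)

def crossingSubgraph (x y : V) : ℕ := if x ∈ S ↔ y ∉ S then min (G x y) 1 else 0

theorem crossingSubgraph_comm (hG : ∀ x y, G x y = G y x) (x y : V) :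
    crossingSubgraph G S x y = crossingSubgraph G S y x := by
  simp only [crossingSubgraph, hG x y]
  exact if_congr (by tauto) rfl rfl

theorem crossingSubgraph_le_one (x y : V) : crossingSubgraph G S x y ≤ 1 := by
  unfold crossingSubgraph; split_ifs <;> omega

theorem crossingSubgraph_le (x y : V) : crossingSubgraph G S x y ≤ G x y := by
  unfold crossingSubgraph; split_ifs <;> omega

theorem mem_and_not_mem_or_of_crossingSubgraph_ne_zero {x y : V}
    (h : crossingSubgraph G S x y ≠ 0) :
    (x ∈ S ∧ y ∉ S) ∨ (x ∉ S ∧ y ∈ S) := by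
  unfold crossingSubgraph at h
  split_ifs at h with hxy
  · tauto
  · exact absurd rfl h

theorem sub_crossingSubgraph (x y : V) :
    G x y - crossingSubgraph G S x y = if x ∈ S ↔ y ∉ S then G x y - 1 else G x y := by
  unfold crossingSubgraph; split_ifs <;> omega

theorem expDeg_sub_crossingSubgraph_le [Fintype V] {α : ℝ} (hα : 1 ≤ α) (v : V)
    (hv : ∑ u with ¬(v ∈ S ↔ u ∉ S), expWeight α (G v u)
      ≤ ∑ u with (v ∈ S ↔ u ∉ S), expWeight α (G v u)) :
    expDeg α (fun x y => G x y - crossingSubgraph G S x y) v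
      ≤ 1 / 2 * (1 + α⁻¹) * expDeg α G v := by
  calc expDeg α (fun x y => G x y - crossingSubgraph G S x y) v
      = ∑ u, if v ∈ S ↔ u ∉ S then expWeight α (G v u - 1) else expWeight α (G v u) := by
        simp only [expDeg_eq_sum_expWeight, sub_crossingSubgraph, apply_ite]
    _ ≤ ∑ u, if v ∈ S ↔ u ∉ S then α⁻¹ * expWeight α (G v u) else expWeight α (G v u) :=
        sum_le_sum fun u _ => by split_ifs; exacts [expWeight_pred_le α _, le_rfl]
    _ = α⁻¹ * ∑ u with (v ∈ S ↔ u ∉ S), expWeight α (G v u)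
          + ∑ u with ¬(v ∈ S ↔ u ∉ S), expWeight α (G v u) := by
        rw [sum_ite, mul_sum]
    _ ≤ 1 / 2 * (1 + α⁻¹) * expDeg α G v := by
        rw [expDeg_eq_sum_expWeight, ← sum_filter_add_sum_filter_not univ (v ∈ S ↔ · ∉ S)]
        exact mul_add_le_half_one_add_mul_add (inv_le_one_of_one_le₀ hα) hv

end CrossingSubgraph

theorem erdos_multigraph_bipartite_subgraph {V : Type*} [Fintype V] [Nonempty V]
    (α : ℝ) (hα : 1 < α) (G : V → V → ℕ)
    (hGsymm : ∀ x y, G x y = G y x) (hGloop : ∀ v, G v v = 0) :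
    ∃ H : V → V → ℕ,
      (∀ x y, H x y = H y x) ∧
      (∀ x y, H x y ≤ 1) ∧
      (∀ x y, H x y ≤ G x y) ∧
      (∃ S : Finset V, ∀ x y, H x y ≠ 0 → ((x ∈ S ∧ y ∉ S) ∨ (x ∉ S ∧ y ∈ S))) ∧
      (∀ v, expDeg α (fun x y => G x y - H x y) v ≤ (1 / 2) * (1 + α⁻¹) * expDeg α G v) ∧
      Finset.univ.sup' Finset.univ_nonempty (expDeg α (fun x y => G x y - H x y)) ≤
        (1 / 2) * (1 + α⁻¹) * Finset.univ.sup' Finset.univ_nonempty (expDeg α G) := by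
  classical
  obtain ⟨S, hS⟩ := MaxCut.exists_isMaxCut fun x y => expWeight α (G x y)
  have hdeg (v : V) := expDeg_sub_crossingSubgraph_le G S hα.le v <|
    hS.sum_sameSide_le_sum_otherSide (fun x y => by rw [hGsymm x y])
      (fun v => by rw [hGloop v, expWeight_zero]) v
  refine ⟨crossingSubgraph G S, crossingSubgraph_comm G S hGsymm, crossingSubgraph_le_one G S,
    crossingSubgraph_le G S, ⟨S, fun _ _ => mem_and_not_mem_or_of_crossingSubgraph_ne_zero G S⟩,
    hdeg, ?_⟩
  refine sup'_le _ _ fun v _ => (hdeg v).trans ?_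
  gcongr
  exact le_sup' _ (mem_univ v)
end

section
/- Let α > 1 and let G be a multigraph with maximum α-exponential degree Δ^ex = Δ^ex(α, G) ≥ α. Then there exists a bipartite covering H = {H_1, …, H_m} of G with m ≤ log₂(Δ^ex) / (1 − log₂(1 + α⁻¹)). -/
/-- The maximum `α`-exponential degree `Δ^ex(α, G)` of a multigraph. -/
noncomputable def maxExpDeg {V : Type*} [Fintype V] [Nonempty V]
    (α : ℝ) (G : V → V → ℕ) : ℝ :=
  Finset.univ.sup' Finset.univ_nonempty (expDeg α G)

/-!
Label every vertex `v` by a binary word `c v` of length `m` and let `H_i` separate the vertices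
whose `i`-th letter is `false` from those where it is `true`; the edge `xy` then lies in exactly
`hammingDist (c x) (c y)` of the `H_i`, so it suffices to make that distance at least `G x y`.
Choose the words greedily. Weighting the word `w` by `α ^ (r - 1 - d(w, c))` shows that at most
`α ^ (r - 1) (1 + α⁻¹) ^ m` words lie within distance `< r` of `c`, so the words forbidden for a
new vertex `v` number at most `d^ex(α, v) (1 + α⁻¹) ^ m / α`, which is below `2 ^ m` as soon as
`m + 1` exceeds `log₂ Δ^ex / (1 - log₂ (1 + α⁻¹))`.
-/

open Finset

section Hamming

variable {m : ℕ}

lemma sum_pow_hammingDist (x : ℝ) (c : Fin m → Bool) :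
    ∑ w : Fin m → Bool, x ^ hammingDist w c = (1 + x) ^ m := by
  have hpow (w : Fin m → Bool) : x ^ hammingDist w c = ∏ i, if w i ≠ c i then x else 1 := by
    rw [hammingDist, ← prod_const, prod_filter]
  rw [Fintype.sum_congr _ _ hpow, ← Fintype.prod_sum (fun i b => if b ≠ c i then x else 1),
    ← Fin.prod_const]
  refine prod_congr rfl fun i _ => ?_
  cases c i <;> simp [add_comm]

lemma mul_card_hammingDist_lt_le {α : ℝ} (hα : 1 ≤ α) (c : Fin m → Bool) (r : ℕ) :
    α * #{w | hammingDist w c < r} ≤ α ^ r * (1 + α⁻¹) ^ m := by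
  rw [← sum_pow_hammingDist, mul_sum, card_filter, Nat.cast_sum, mul_sum]
  refine sum_le_sum fun w _ => ?_
  -- a word at distance `d < r` from `c` carries weight `α ^ (r - d) ≥ α`
  split_ifs with hw
  · have hα0 : α ≠ 0 := by positivity
    calc α * ((1 : ℕ) : ℝ) = α := by simp
      _ ≤ α ^ (r - hammingDist w c) := le_self_pow₀ hα (by omega)
      _ = α ^ r * α⁻¹ ^ hammingDist w c := by
        rw [inv_pow, ← div_eq_mul_inv, pow_sub₀ _ hα0 hw.le]
        rfl
  · simp only [Nat.cast_zero, mul_zero]; positivity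

lemma exists_forall_le_hammingDist_s10 {ι : Type*} {α : ℝ} (hα : 1 ≤ α) (S : Finset ι)
    (c : ι → Fin m → Bool) (r : ι → ℕ)
    (h : (∑ u ∈ S with 0 < r u, α ^ r u) * (1 + α⁻¹) ^ m < α * 2 ^ m) :
    ∃ w, ∀ u ∈ S, r u ≤ hammingDist w (c u) := by
  set bad := S.biUnion fun u => ({w | hammingDist w (c u) < r u} : Finset (Fin m → Bool))
  have hα0 : 0 < α := by positivity
  have hsum : α * #bad ≤ ∑ u ∈ S with 0 < r u, α * #{w | hammingDist w (c u) < r u} := by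
    rw [sum_filter_of_ne fun u _ hu => ?_, ← mul_sum]
    · exact mul_le_mul_of_nonneg_left (mod_cast card_biUnion_le) hα0.le
    · refine Nat.pos_of_ne_zero fun h0 => hu ?_
      simp [h0]
  have hballs := sum_le_sum fun u (_ : u ∈ {u ∈ S | 0 < r u}) =>
    mul_card_hammingDist_lt_le hα (c u) (r u)
  rw [← sum_mul] at hballs
  have hbad : (#bad : ℝ) < 2 ^ m := lt_of_mul_lt_mul_left (by linarith) hα0.le
  obtain ⟨w, -, hw⟩ := exists_mem_notMem_of_card_lt_card (s := bad) (t := univ) <| by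
    rw [card_univ, Fintype.card_fun, Fintype.card_bool, Fintype.card_fin]
    exact_mod_cast hbad
  refine ⟨w, fun u hu => not_lt.mp fun hlt => hw ?_⟩
  simp only [bad, mem_biUnion, mem_filter, mem_univ, true_and]
  exact ⟨u, hu, hlt⟩

end Hamming

section Multigraph

variable {V : Type*} [Fintype V]

theorem exists_le_hammingDist_of_expDeg {α : ℝ} (hα : 1 ≤ α) (G : V → V → ℕ)
    (hGsymm : ∀ x y, G x y = G y x) (hGloop : ∀ v, G v v = 0) (m : ℕ)
    (hdeg : ∀ v, expDeg α G v * (1 + α⁻¹) ^ m < α * 2 ^ m) :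
    ∃ c : V → Fin m → Bool, ∀ x y, G x y ≤ hammingDist (c x) (c y) := by
  classical
  suffices ∀ S : Finset V, ∃ c : V → Fin m → Bool,
      ∀ x ∈ S, ∀ y ∈ S, G x y ≤ hammingDist (c x) (c y) by
    obtain ⟨c, hc⟩ := this univ
    exact ⟨c, fun x y => hc x (mem_univ x) y (mem_univ y)⟩
  intro S
  induction S using Finset.induction_on with
  | empty => exact ⟨fun _ _ => false, by simp⟩
  | @insert a S haS ih =>
    obtain ⟨c, hc⟩ := ih
    have hS : (∑ u ∈ S with 0 < G a u, α ^ G a u) ≤ expDeg α G a :=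
      sum_le_sum_of_subset_of_nonneg (filter_subset_filter _ (subset_univ S))
        fun _ _ _ => by positivity
    obtain ⟨w, hw⟩ := exists_forall_le_hammingDist_s10 hα S c (G a)
      ((mul_le_mul_of_nonneg_right hS (by positivity)).trans_lt (hdeg a))
    refine ⟨Function.update c a w, fun x hx y hy => ?_⟩
    rcases mem_insert.mp hx with rfl | hxS <;> rcases mem_insert.mp hy with rfl | hyS
    · simp [hGloop]
    · rw [Function.update_self, Function.update_of_ne (ne_of_mem_of_not_mem hyS haS)]
      exact hw y hyS
    · rw [Function.update_self, Function.update_of_ne (ne_of_mem_of_not_mem hxS haS),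
        hammingDist_comm, hGsymm]
      exact hw x hxS
    · rw [Function.update_of_ne (ne_of_mem_of_not_mem hxS haS),
        Function.update_of_ne (ne_of_mem_of_not_mem hyS haS)]
      exact hc x hxS y hyS

section BitFiber

variable {m : ℕ} (c : V → Fin m → Bool)

def bitFiber (b : Bool) (i : Fin m) : Finset V := {v | c v i = b}

lemma disjoint_bitFiber_false_true (i : Fin m) :
    Disjoint (bitFiber c false i) (bitFiber c true i) := by
  simp only [bitFiber, disjoint_filter]
  simp

lemma card_separating_bitFiber_eq_hammingDist [DecidableEq V] (x y : V) :
    #{i | (x ∈ bitFiber c false i ∧ y ∈ bitFiber c true i) ∨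
      (x ∈ bitFiber c true i ∧ y ∈ bitFiber c false i)} = hammingDist (c x) (c y) := by
  refine congrArg card (filter_congr fun i _ => ?_)
  simp only [bitFiber, mem_filter, mem_univ, true_and]
  cases c x i <;> cases c y i <;> simp

end BitFiber

end Multigraph

lemma logb_two_one_add_inv_lt_one {α : ℝ} (hα : 1 < α) : Real.logb 2 (1 + α⁻¹) < 1 := by
  rw [Real.logb_lt_iff_lt_rpow one_lt_two (by positivity), Real.rpow_one]
  linarith [inv_lt_one_of_one_lt₀ hα]

lemma mul_one_add_inv_pow_lt {α D : ℝ} (hα : 1 < α) (hD : 0 < D) {m : ℕ}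
    (hm : Real.logb 2 D / (1 - Real.logb 2 (1 + α⁻¹)) < m + 1) :
    D * (1 + α⁻¹) ^ m < α * 2 ^ m := by
  have hα0 : 0 < α := by linarith
  set β := 2 / (1 + α⁻¹)
  have hβ : Real.logb 2 β = 1 - Real.logb 2 (1 + α⁻¹) := by
    rw [Real.logb_div two_ne_zero (by positivity), Real.logb_self_eq_one one_lt_two]
  have hβα : β ≤ α := by
    rw [div_le_iff₀ (by positivity), mul_add, mul_inv_cancel₀ hα0.ne']
    linarith
  have hDβ : D < β ^ (m + 1) := by
    rw [← Real.logb_lt_logb_iff one_lt_two hD (by positivity), Real.logb_pow, hβ]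
    push_cast
    exact (div_lt_iff₀ (by linarith [logb_two_one_add_inv_lt_one hα])).mp hm
  calc D * (1 + α⁻¹) ^ m < β ^ (m + 1) * (1 + α⁻¹) ^ m := by gcongr
    _ = β * 2 ^ m := by
      rw [pow_succ, mul_right_comm, ← mul_pow, div_mul_cancel₀ _ (by positivity), mul_comm]
    _ ≤ α * 2 ^ m := by gcongr

theorem cover_bipartite_maxdeg {V : Type*} [Fintype V] [Nonempty V] [DecidableEq V]
    (α : ℝ) (hα : 1 < α) (G : V → V → ℕ)
    (hGsymm : ∀ x y, G x y = G y x) (hGloop : ∀ v, G v v = 0)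
    (hΔ : α ≤ maxExpDeg α G) :
    ∃ (m : ℕ) (A B : Fin m → Finset V),
      (∀ i, Disjoint (A i) (B i)) ∧
      (∀ x y : V, G x y ≤ (Finset.univ.filter
        (fun i => (x ∈ A i ∧ y ∈ B i) ∨ (x ∈ B i ∧ y ∈ A i))).card) ∧
      (m : ℝ) ≤ Real.logb 2 (maxExpDeg α G) / (1 - Real.logb 2 (1 + α⁻¹)) := by
  set t := Real.logb 2 (maxExpDeg α G) / (1 - Real.logb 2 (1 + α⁻¹))
  have hΔ1 : 1 ≤ maxExpDeg α G := hα.le.trans hΔ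
  have ht : 0 ≤ t := div_nonneg (Real.logb_nonneg one_lt_two hΔ1)
    (by linarith [logb_two_one_add_inv_lt_one hα])
  obtain ⟨c, hc⟩ := exists_le_hammingDist_of_expDeg hα.le G hGsymm hGloop ⌊t⌋₊ fun v =>
    (mul_le_mul_of_nonneg_right (le_sup' (expDeg α G) (mem_univ v)) (by positivity)).trans_lt
      (mul_one_add_inv_pow_lt hα (zero_lt_one.trans_le hΔ1) (Nat.lt_floor_add_one t))
  refine ⟨⌊t⌋₊, bitFiber c false, bitFiber c true, disjoint_bitFiber_false_true c,
    fun x y => (hc x y).trans_eq (card_separating_bitFiber_eq_hammingDist c x y).symm,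
    Nat.floor_le ht⟩
end

section
/- Let T = {(x,y) ∈ ℝ² : 0 ≤ x ≤ 1, 0 ≤ y ≤ x} and let 0 < ε < 1. Let S be a countable collection of axis-parallel squares each completely contained in T. If the Lebesgue measure of ⋃_{S ∈ S} S is at least (1−ε)/2, then Σ_{S ∈ S} ℓ(S) ≥ (1/2)·log₂(1/ε). In particular, if ⋃_{S ∈ S} S contains almost every point of T, then Σ_{S ∈ S} ℓ(S) diverges. -/
/-!
Each square `Iᵢ × Jᵢ ⊆ T` lies below the diagonal, so `Jᵢ` lies to the left of `Iᵢ`. Reflect the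
squares into `Jᵢ × Iᵢ` as well: the part `K` of `[0,1]²` missed by all these rectangles is, up to
the reflection, the part of `T` missed by the squares, so its measure is at most `ε`. On the
other hand `|K| ≥ 2^(-∑ (|Iᵢ| + |Jᵢ|)) = 2^(-2 ∑ ℓᵢ)`, which gives the bound.

For this lower bound, take finitely many pairs first. Every choice `χ` of avoiding `Iᵢ` or `Jᵢ`
for each `i` gives a set `Z_χ` with `Z_χ × Z_χ ⊆ K`, so the slice `a(z) = |{w | (z, w) ∈ K}|`
satisfies `∫_{Z_χ} 1/a ≤ 1`. A point lying in `d(z)` of the intervals lies in `2^(n - d(z))` of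
the `Z_χ`, hence `∫ 2^(-d)/a ≤ 1`. Together with `∫ a/|K| = 1` and the inequality
`log x + log y + 2 ≤ x + y`, applied to `x = 2^(-d)/a` and `y = a/|K|`, this gives
`log (1/|K|) ≤ log 2 · ∫ d ≤ log 2 · ∑ (|Iᵢ| + |Jᵢ|)`. Continuity from above then handles
countably many squares.
-/

open MeasureTheory Set
open scoped ENNReal NNReal

lemma Real.log_mul_add_two_le {x y : ℝ} (hx : 0 < x) (hy : 0 < y) :
    Real.log (x * y) + 2 ≤ x + y := by
  rw [Real.log_mul hx.ne' hy.ne']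
  linarith [Real.log_le_sub_one_of_pos hx, Real.log_le_sub_one_of_pos hy]

lemma ENNReal.ofReal_neg_log_add_two_le {a c : ℝ≥0∞} (ha : a ≠ ⊤) (hc₀ : c ≠ 0) (hc₁ : c ≤ 1)
    (d : ℕ) :
    ENNReal.ofReal (-Real.log c.toReal) + 2
      ≤ d * ENNReal.ofReal (Real.log 2) + 2⁻¹ ^ d / a + a / c := by
  -- for `a = 0` the right-hand side is `⊤`, since `2⁻¹ ^ d / 0 = ⊤` in `ℝ≥0∞`
  rcases eq_or_ne a 0 with rfl | ha₀
  · simp [ENNReal.div_zero]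
  have hc : 0 < c.toReal := ENNReal.toReal_pos hc₀ (ne_top_of_le_ne_top ENNReal.one_ne_top hc₁)
  have ha' : 0 < a.toReal := ENNReal.toReal_pos ha₀ ha
  have hlog : 0 ≤ -Real.log c.toReal := by
    have := ENNReal.toReal_mono ENNReal.one_ne_top hc₁
    simp at this
    linarith [Real.log_nonpos hc.le this]
  have key := Real.log_mul_add_two_le (x := 2⁻¹ ^ d / a.toReal) (y := a.toReal / c.toReal)
    (by positivity) (by positivity)
  rw [show 2⁻¹ ^ d / a.toReal * (a.toReal / c.toReal) = 2⁻¹ ^ d / c.toReal by field_simp,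
    Real.log_div (by positivity) hc.ne', Real.log_pow, Real.log_inv] at key
  calc ENNReal.ofReal (-Real.log c.toReal) + 2 = ENNReal.ofReal (-Real.log c.toReal + 2) := by
        rw [ENNReal.ofReal_add hlog zero_le_two, ENNReal.ofReal_ofNat]
    _ ≤ ENNReal.ofReal (d * Real.log 2 + 2⁻¹ ^ d / a.toReal + a.toReal / c.toReal) :=
        ENNReal.ofReal_le_ofReal (by linarith)
    _ ≤ ENNReal.ofReal (d * Real.log 2) + ENNReal.ofReal (2⁻¹ ^ d / a.toReal)
          + ENNReal.ofReal (a.toReal / c.toReal) :=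
        ENNReal.ofReal_add_le.trans (by gcongr; exact ENNReal.ofReal_add_le)
    _ = d * ENNReal.ofReal (Real.log 2) + 2⁻¹ ^ d / a + a / c := by
        rw [ENNReal.ofReal_mul (Nat.cast_nonneg d), ENNReal.ofReal_natCast,
          ENNReal.ofReal_div_of_pos ha', ENNReal.ofReal_div_of_pos hc,
          ENNReal.ofReal_pow (by norm_num),
          ENNReal.ofReal_inv_of_pos two_pos, ENNReal.ofReal_ofNat, ENNReal.ofReal_toReal ha,
          ENNReal.ofReal_toReal (ne_top_of_le_ne_top ENNReal.one_ne_top hc₁)]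

section SymmRects

variable {α ι : Type*} {A B : ι → Set α}

def symmRects (A B : ι → Set α) : Set (α × α) := ⋃ i, A i ×ˢ B i ∪ B i ×ˢ A i

def patternSet (A B : ι → Set α) (χ : ι → Bool) : Set α :=
  {z | ∀ i, z ∉ if χ i then B i else A i}

open Classical Finset in
noncomputable def coverCount [Fintype ι] (A B : ι → Set α) (z : α) : ℕ :=
  #{i | z ∈ A i ∪ B i}

lemma prod_patternSet_subset_compl_symmRects (χ : ι → Bool) :
    patternSet A B χ ×ˢ patternSet A B χ ⊆ (symmRects A B)ᶜ := by
  rintro ⟨z, w⟩ ⟨hz, hw⟩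
  simp only [symmRects, mem_compl_iff, mem_iUnion, mem_union, mem_prod, not_exists]
  intro i
  have hzi := hz i
  have hwi := hw i
  cases h : χ i <;> simp only [h, Bool.false_eq_true, if_true, if_false] at hzi hwi <;> tauto

lemma natCast_coverCount [Fintype ι] (z : α) :
    (coverCount A B z : ℝ≥0∞) = ∑ i, (A i ∪ B i).indicator 1 z := by
  classical
  rw [coverCount, Finset.card_filter]
  push_cast
  simp [indicator_apply]

lemma sum_indicator_patternSet [Fintype ι] [DecidableEq ι] {z : α} (hz : ∀ i, z ∉ A i ∩ B i) :
    ∑ χ : ι → Bool, (patternSet A B χ).indicator 1 z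
      = 2 ^ Fintype.card ι * (2⁻¹ : ℝ≥0∞) ^ coverCount A B z := by
  classical
  have factor : ∀ i, ∑ b : Bool, (if z ∉ (if b then B i else A i) then 1 else 0 : ℝ≥0∞)
      = 2 * if z ∈ A i ∪ B i then 2⁻¹ else 1 := by
    intro i
    have := hz i
    by_cases hA : z ∈ A i <;> by_cases hB : z ∈ B i <;>
      simp_all [ENNReal.mul_inv_cancel, one_add_one_eq_two]
  calc ∑ χ : ι → Bool, (patternSet A B χ).indicator 1 z
      = ∑ χ : ι → Bool, ∏ i, (if z ∉ (if χ i then B i else A i) then 1 else 0 : ℝ≥0∞) := by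
        refine Finset.sum_congr rfl fun χ _ => ?_
        rw [Finset.prod_boole]
        simp [patternSet, indicator_apply]
    _ = ∏ i, (2 * if z ∈ A i ∪ B i then 2⁻¹ else 1) := by
        rw [← Fintype.prod_sum fun i (b : Bool) =>
          (if z ∉ (if b then B i else A i) then 1 else 0 : ℝ≥0∞)]
        simp_rw [factor]
    _ = 2 ^ Fintype.card ι * 2⁻¹ ^ coverCount A B z := by
        rw [Finset.prod_mul_distrib, Finset.prod_ite]
        simp [coverCount]

variable [MeasurableSpace α] {μ : Measure α}

lemma measurableSet_symmRects [Countable ι] (hA : ∀ i, MeasurableSet (A i))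
    (hB : ∀ i, MeasurableSet (B i)) : MeasurableSet (symmRects A B) :=
  .iUnion fun i => ((hA i).prod (hB i)).union ((hB i).prod (hA i))

lemma measurableSet_patternSet [Countable ι] (hA : ∀ i, MeasurableSet (A i))
    (hB : ∀ i, MeasurableSet (B i)) (χ : ι → Bool) : MeasurableSet (patternSet A B χ) := by
  simp only [patternSet, ofPred_forall]
  refine .iInter fun i => ?_
  cases χ i
  exacts [(hA i).compl, (hB i).compl]

lemma setLIntegral_inv_measure_slice_le_one (χ : ι → Bool) :
    ∫⁻ z in patternSet A B χ, (μ (Prod.mk z ⁻¹' (symmRects A B)ᶜ))⁻¹ ∂μ ≤ 1 :=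
  calc ∫⁻ z in patternSet A B χ, (μ (Prod.mk z ⁻¹' (symmRects A B)ᶜ))⁻¹ ∂μ
      ≤ ∫⁻ _ in patternSet A B χ, (μ (patternSet A B χ))⁻¹ ∂μ := by
        refine setLIntegral_mono measurable_const fun z hz => ENNReal.inv_le_inv.2 ?_
        exact measure_mono fun w hw => prod_patternSet_subset_compl_symmRects χ ⟨hz, hw⟩
    _ ≤ 1 := by rw [setLIntegral_const]; exact ENNReal.inv_mul_le_one _

lemma lintegral_coverCount [Fintype ι] (hA : ∀ i, MeasurableSet (A i))
    (hB : ∀ i, MeasurableSet (B i)) :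
    ∫⁻ z, (coverCount A B z : ℝ≥0∞) ∂μ = ∑ i, μ (A i ∪ B i) := by
  simp_rw [natCast_coverCount]
  rw [lintegral_finsetSum _ fun i _ => measurable_one.indicator ((hA i).union (hB i))]
  simp [lintegral_indicator_one ((hA _).union (hB _))]

lemma measurable_coverCount [Fintype ι] (hA : ∀ i, MeasurableSet (A i))
    (hB : ∀ i, MeasurableSet (B i)) : Measurable fun z => (coverCount A B z : ℝ≥0∞) := by
  simp_rw [natCast_coverCount]
  exact Finset.measurable_sum _ fun i _ => measurable_one.indicator ((hA i).union (hB i))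

lemma lintegral_two_inv_pow_coverCount_div_le_one [Fintype ι] [SFinite μ]
    (hA : ∀ i, MeasurableSet (A i)) (hB : ∀ i, MeasurableSet (B i))
    (hAB : ∀ i, μ (A i ∩ B i) = 0) :
    ∫⁻ z, 2⁻¹ ^ coverCount A B z / μ (Prod.mk z ⁻¹' (symmRects A B)ᶜ) ∂μ ≤ 1 := by
  classical
  set a := fun z => μ (Prod.mk z ⁻¹' (symmRects A B)ᶜ)
  have ha : Measurable a :=
    measurable_measure_prodMk_left (measurableSet_symmRects hA hB).compl
  have hZ := measurableSet_patternSet hA hB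
  have hpattern : ∀ᵐ z ∂μ, 2⁻¹ ^ coverCount A B z / a z
      = 2⁻¹ ^ Fintype.card ι
        * ∑ χ : ι → Bool, (patternSet A B χ).indicator (fun z => (a z)⁻¹) z := by
    filter_upwards [ae_all_iff.2 fun i => measure_eq_zero_iff_ae_notMem.1 (hAB i)] with z hz
    have hpow : (2⁻¹ : ℝ≥0∞) ^ coverCount A B z
        = 2⁻¹ ^ Fintype.card ι * (2 ^ Fintype.card ι * 2⁻¹ ^ coverCount A B z) := by
      rw [← mul_assoc, ← mul_pow, ENNReal.inv_mul_cancel two_ne_zero ENNReal.ofNat_ne_top,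
        one_pow, one_mul]
    rw [div_eq_mul_inv, hpow, ← sum_indicator_patternSet hz, mul_assoc, Finset.sum_mul]
    congr 1
    refine Finset.sum_congr rfl fun χ _ => ?_
    simp only [indicator_apply, Pi.one_apply]
    split_ifs <;> simp
  calc ∫⁻ z, 2⁻¹ ^ coverCount A B z / a z ∂μ
      = 2⁻¹ ^ Fintype.card ι * ∑ χ : ι → Bool, ∫⁻ z in patternSet A B χ, (a z)⁻¹ ∂μ := by
        rw [lintegral_congr_ae hpattern, lintegral_const_mul' _ _ (by simp),
          lintegral_finsetSum]
        · simp_rw [lintegral_indicator (hZ _)]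
        · exact fun χ _ => (ha.inv.indicator (hZ χ))
    _ ≤ 2⁻¹ ^ Fintype.card ι * ∑ _χ : ι → Bool, 1 := by
        gcongr with χ
        exact setLIntegral_inv_measure_slice_le_one χ
    _ = 1 := by
        simp [← ENNReal.inv_pow, ENNReal.inv_mul_cancel]

lemma measure_prod_compl_symmRects_ne_zero [Fintype ι] [SFinite μ] [NeZero μ]
    (hA : ∀ i, MeasurableSet (A i)) (hB : ∀ i, MeasurableSet (B i))
    (hAB : ∀ i, μ (A i ∩ B i) = 0) :
    μ.prod μ (symmRects A B)ᶜ ≠ 0 := by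
  intro h
  have hK := (measurableSet_symmRects hA hB).compl
  rw [Measure.prod_apply hK, lintegral_eq_zero_iff (measurable_measure_prodMk_left hK)] at h
  have hX := lintegral_two_inv_pow_coverCount_div_le_one hA hB hAB
  rw [lintegral_congr_ae (g := fun _ => ⊤) (h.mono fun z hz => ?_)] at hX
  · simp [ENNReal.top_mul (NeZero.ne (μ univ))] at hX
  · rw [show μ (Prod.mk z ⁻¹' (symmRects A B)ᶜ) = 0 from hz]
    exact ENNReal.div_zero (by simp)

lemma ofReal_neg_log_measure_prod_compl_symmRects_le [Fintype ι] [IsProbabilityMeasure μ]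
    (hA : ∀ i, MeasurableSet (A i)) (hB : ∀ i, MeasurableSet (B i))
    (hAB : ∀ i, μ (A i ∩ B i) = 0) :
    ENNReal.ofReal (-Real.log (μ.prod μ (symmRects A B)ᶜ).toReal)
      ≤ (∑ i, μ (A i ∪ B i)) * ENNReal.ofReal (Real.log 2) := by
  set K := (symmRects A B)ᶜ
  have hK : MeasurableSet K := (measurableSet_symmRects hA hB).compl
  set a := fun z => μ (Prod.mk z ⁻¹' K)
  have ha : Measurable a := measurable_measure_prodMk_left hK
  set c := μ.prod μ K
  have hc : c = ∫⁻ z, a z ∂μ := Measure.prod_apply hK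
  have hc₀ : c ≠ 0 := measure_prod_compl_symmRects_ne_zero hA hB hAB
  have hd := measurable_coverCount hA hB
  refine (ENNReal.add_le_add_iff_right (ENNReal.ofNat_ne_top (n := 2))).1 ?_
  calc ENNReal.ofReal (-Real.log c.toReal) + 2
      = ∫⁻ _, (ENNReal.ofReal (-Real.log c.toReal) + 2) ∂μ := by simp
    _ ≤ ∫⁻ z, (coverCount A B z * ENNReal.ofReal (Real.log 2)
          + 2⁻¹ ^ coverCount A B z / a z + a z / c) ∂μ :=
      lintegral_mono fun z => ENNReal.ofReal_neg_log_add_two_le (measure_ne_top _ _) hc₀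
        prob_le_one _
    _ = (∫⁻ z, (coverCount A B z : ℝ≥0∞) ∂μ) * ENNReal.ofReal (Real.log 2)
          + ∫⁻ z, 2⁻¹ ^ coverCount A B z / a z ∂μ + (∫⁻ z, a z ∂μ) / c := by
      simp_rw [div_eq_mul_inv (a _) c, div_eq_mul_inv (∫⁻ z, a z ∂μ) c]
      rw [lintegral_add_right _ (ha.mul_const _), lintegral_add_left (hd.mul_const _),
        lintegral_mul_const _ hd, lintegral_mul_const _ ha]
    _ ≤ (∑ i, μ (A i ∪ B i)) * ENNReal.ofReal (Real.log 2) + 1 + 1 := by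
      rw [lintegral_coverCount hA hB, ← hc, ENNReal.div_self hc₀ (measure_ne_top _ _)]
      gcongr
      exact lintegral_two_inv_pow_coverCount_div_le_one hA hB hAB
    _ = (∑ i, μ (A i ∪ B i)) * ENNReal.ofReal (Real.log 2) + 2 := by
      rw [add_assoc, one_add_one_eq_two]

end SymmRects

section Main
variable {α : Type*} [MeasurableSpace α] {μ : Measure α} [IsProbabilityMeasure μ]

theorem ofReal_two_rpow_neg_le_measure_compl_symmRects {ι : Type*} [Fintype ι]
    {A B : ι → Set α} (hA : ∀ i, MeasurableSet (A i)) (hB : ∀ i, MeasurableSet (B i))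
    (hAB : ∀ i, μ (A i ∩ B i) = 0) {L : ℝ≥0} (hL : ∑ i, (μ (A i) + μ (B i)) ≤ L) :
    ENNReal.ofReal (2 ^ (-(L : ℝ))) ≤ μ.prod μ (symmRects A B)ᶜ := by
  set c := μ.prod μ (symmRects A B)ᶜ
  have hc : 0 < c.toReal := ENNReal.toReal_pos
    (measure_prod_compl_symmRects_ne_zero hA hB hAB) (measure_ne_top _ _)
  have hlog : -Real.log c.toReal ≤ L * Real.log 2 := by
    have : ENNReal.ofReal (-Real.log c.toReal) ≤ L * ENNReal.ofReal (Real.log 2) :=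
      (ofReal_neg_log_measure_prod_compl_symmRects_le hA hB hAB).trans
        (by gcongr; exact (Finset.sum_le_sum fun i _ => measure_union_le _ _).trans hL)
    rwa [← ENNReal.ofReal_coe_nnreal, ← ENNReal.ofReal_mul L.coe_nonneg,
      ENNReal.ofReal_le_ofReal_iff (by positivity)] at this
  refine (ENNReal.ofReal_le_ofReal ?_).trans ENNReal.ofReal_toReal_le
  rw [Real.rpow_def_of_pos two_pos, ← Real.exp_log hc]
  exact Real.exp_le_exp.2 (by linarith)

theorem ofReal_two_rpow_neg_le_measure_compl_symmRects_nat {A B : ℕ → Set α}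
    (hA : ∀ i, MeasurableSet (A i)) (hB : ∀ i, MeasurableSet (B i))
    (hAB : ∀ i, μ (A i ∩ B i) = 0) {L : ℝ≥0} (hL : ∑' i, (μ (A i) + μ (B i)) ≤ L) :
    ENNReal.ofReal (2 ^ (-(L : ℝ))) ≤ μ.prod μ (symmRects A B)ᶜ := by
  set K : ℕ → Set (α × α) := fun n => (symmRects (fun i : Fin n => A i) (fun i => B i))ᶜ
  have hK : (symmRects A B)ᶜ = ⋂ n, K n := by
    ext q
    simp only [K, symmRects, mem_compl_iff, mem_iInter, mem_iUnion, not_exists]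
    exact ⟨fun h n i => h i, fun h i => h (i + 1) ⟨i, i.lt_succ_self⟩⟩
  have hanti : Antitone K := fun n m hnm q hq => by
    simp only [K, symmRects, mem_compl_iff, mem_iUnion, not_exists] at hq ⊢
    exact fun i => hq ⟨i, i.2.trans_le hnm⟩
  rw [hK, hanti.measure_iInter
    (fun n => (measurableSet_symmRects (fun i : Fin n => hA i) (fun i => hB i)).compl
      |>.nullMeasurableSet)
    ⟨0, measure_ne_top _ _⟩]
  refine le_iInf fun n => ofReal_two_rpow_neg_le_measure_compl_symmRects (fun i : Fin n => hA i)
    (fun i => hB i) (fun i => hAB i) (le_trans ?_ hL)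
  rw [Fin.sum_univ_eq_sum_range (fun i => μ (A i) + μ (B i))]
  exact ENNReal.sum_le_tsum _

end Main

section Triangle

def triangle : Set (ℝ × ℝ) := {q | 0 ≤ q.1 ∧ q.1 ≤ 1 ∧ 0 ≤ q.2 ∧ q.2 ≤ q.1}

lemma measurableSet_triangle : MeasurableSet triangle :=
  (measurableSet_le measurable_const measurable_fst).inter <|
    (measurableSet_le measurable_fst measurable_const).inter <|
      (measurableSet_le measurable_const measurable_snd).inter
        (measurableSet_le measurable_snd measurable_fst)

lemma volume_triangle : volume triangle = ENNReal.ofReal (1 / 2) := by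
  have hslice : ∀ x, volume (Prod.mk x ⁻¹' triangle) = (Icc 0 1).indicator ENNReal.ofReal x := by
    intro x
    by_cases hx : x ∈ Icc (0 : ℝ) 1
    · have : Prod.mk x ⁻¹' triangle = Icc 0 x := by ext y; simp [triangle, hx.1, hx.2]
      rw [indicator_of_mem hx, this, Real.volume_Icc, sub_zero]
    · have : Prod.mk x ⁻¹' triangle = ∅ := by
        ext y; simp only [triangle, mem_preimage, mem_ofPred_eq, mem_empty_iff_false, iff_false]
        exact fun h => hx ⟨h.1, h.2.1⟩
      rw [indicator_of_notMem hx, this, measure_empty]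
  have hintegral : ∫⁻ x in Icc (0 : ℝ) 1, ENNReal.ofReal x = ENNReal.ofReal (1 / 2) := by
    rw [← ofReal_integral_eq_lintegral_ofReal, integral_Icc_eq_integral_Ioc,
      ← intervalIntegral.integral_of_le zero_le_one, integral_id]
    · norm_num
    · exact continuous_id.integrableOn_Icc
    · exact (ae_restrict_iff' measurableSet_Icc).2 (.of_forall fun x hx => hx.1)
  rw [Measure.volume_eq_prod, Measure.prod_apply measurableSet_triangle, lintegral_congr hslice,
    lintegral_indicator measurableSet_Icc, hintegral]

lemma two_mul_volume_triangle_diff_le {U : Set (ℝ × ℝ)} (hU : MeasurableSet U) (hUT : U ⊆ triangle)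
    {ε : ℝ} (hε₀ : 0 ≤ ε) (hε₁ : ε ≤ 1) (hvol : ENNReal.ofReal ((1 - ε) / 2) ≤ volume U) :
    2 * volume (triangle \ U) ≤ ENNReal.ofReal ε := by
  have hUfin : volume U ≠ ⊤ :=
    ne_top_of_le_ne_top (volume_triangle ▸ ENNReal.ofReal_ne_top) (measure_mono hUT)
  have : volume (triangle \ U) ≤ ENNReal.ofReal (ε / 2) := by
    rw [measure_sdiff_le_iff_le_add hU.nullMeasurableSet hUT hUfin, volume_triangle]
    calc ENNReal.ofReal (1 / 2) = ENNReal.ofReal ((1 - ε) / 2) + ENNReal.ofReal (ε / 2) := by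
          rw [← ENNReal.ofReal_add (by linarith) (by linarith)]; ring_nf
      _ ≤ volume U + ENNReal.ofReal (ε / 2) := by gcongr
  calc 2 * volume (triangle \ U) ≤ 2 * ENNReal.ofReal (ε / 2) := by gcongr
    _ = ENNReal.ofReal ε := by
      rw [← ENNReal.ofReal_ofNat 2, ← ENNReal.ofReal_mul zero_le_two]; ring_nf

instance : IsProbabilityMeasure (volume.restrict (Icc (0 : ℝ) 1)) := ⟨by simp⟩

lemma snd_add_le_fst_of_Icc_subset_triangle {p : ℝ × ℝ} {l : ℝ} (hl : 0 ≤ l)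
    (h : Icc p (p + (l, l)) ⊆ triangle) : p.2 + l ≤ p.1 :=
  (h (show (p.1, p.2 + l) ∈ Icc p (p + (l, l)) from
    ⟨⟨le_rfl, by simpa using hl⟩, ⟨by simpa using hl, le_rfl⟩⟩)).2.2.2

variable {p : ℕ → ℝ × ℝ} {l : ℕ → ℝ}

lemma measure_compl_symmRects_le_two_mul_volume_triangle_diff :
    (volume.restrict (Icc (0 : ℝ) 1)).prod (volume.restrict (Icc (0 : ℝ) 1))
        (symmRects (fun i => Icc (p i).1 ((p i).1 + l i)) (fun i => Icc (p i).2 ((p i).2 + l i)))ᶜ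
      ≤ 2 * volume (triangle \ ⋃ i, Icc (p i) (p i + (l i, l i))) := by
  set R := triangle \ ⋃ i, Icc (p i) (p i + (l i, l i))
  have hR : MeasurableSet R := measurableSet_triangle.diff (.iUnion fun i => measurableSet_Icc)
  have hsub :
      (symmRects (fun i => Icc (p i).1 ((p i).1 + l i)) (fun i => Icc (p i).2 ((p i).2 + l i)))ᶜ
      ∩ Icc 0 1 ×ˢ Icc 0 1 ⊆ R ∪ Prod.swap ⁻¹' R := by
    rintro ⟨x, y⟩ ⟨hq, ⟨hx₀, hx₁⟩, ⟨hy₀, hy₁⟩⟩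
    simp only [symmRects, mem_compl_iff, mem_iUnion, mem_union, not_exists, not_or] at hq
    simp only [R, triangle, mem_union, mem_sdiff, mem_preimage, Prod.swap_prod_mk, mem_ofPred_eq,
      mem_iUnion, Icc_prod_eq, not_exists]
    rcases le_total y x with hyx | hxy
    · exact Or.inl ⟨⟨hx₀, hx₁, hy₀, hyx⟩, fun i => (hq i).1⟩
    · exact Or.inr ⟨⟨hy₀, hy₁, hx₀, hxy⟩, fun i h => (hq i).2 ⟨h.2, h.1⟩⟩
  rw [Measure.prod_restrict, ← Measure.volume_eq_prod,
    Measure.restrict_apply' (measurableSet_Icc.prod measurableSet_Icc)]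
  calc _ ≤ volume (R ∪ Prod.swap ⁻¹' R) := measure_mono hsub
    _ ≤ volume R + volume (Prod.swap ⁻¹' R) := measure_union_le _ _
    _ = 2 * volume R := by
      rw [Measure.volume_eq_prod,
        Measure.measurePreserving_swap.measure_preimage hR.nullMeasurableSet, two_mul]

theorem ofReal_two_rpow_neg_le_two_mul_volume_triangle_diff (hl : ∀ i, 0 ≤ l i)
    (hsub : ∀ i, Icc (p i) (p i + (l i, l i)) ⊆ triangle) {σ : ℝ≥0}
    (hσ : ∑' i, ENNReal.ofReal (l i) ≤ σ) :
    ENNReal.ofReal (2 ^ (-(2 * σ : ℝ)))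
      ≤ 2 * volume (triangle \ ⋃ i, Icc (p i) (p i + (l i, l i))) := by
  have hAB : ∀ i, Icc (p i).1 ((p i).1 + l i) ∩ Icc (p i).2 ((p i).2 + l i) ⊆ {(p i).1} :=
    fun i x ⟨hxA, hxB⟩ => le_antisymm
      (hxB.2.trans (snd_add_le_fst_of_Icc_subset_triangle (hl i) (hsub i))) hxA.1
  have hmeas : ∀ (a b : ℝ), volume.restrict (Icc (0 : ℝ) 1) (Icc a (a + b)) ≤ ENNReal.ofReal b :=
    fun a b => (Measure.restrict_le_self _).trans (by simp [Real.volume_Icc])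
  have hL : ∑' i, (volume.restrict (Icc (0 : ℝ) 1) (Icc (p i).1 ((p i).1 + l i))
        + volume.restrict (Icc (0 : ℝ) 1) (Icc (p i).2 ((p i).2 + l i))) ≤ ((2 * σ : ℝ≥0) : ℝ≥0∞) :=
    calc _ ≤ ∑' i, 2 * ENNReal.ofReal (l i) :=
          ENNReal.tsum_le_tsum fun i =>
            (add_le_add (hmeas _ _) (hmeas _ _)).trans_eq (two_mul _).symm
      _ ≤ ((2 * σ : ℝ≥0) : ℝ≥0∞) := by rw [ENNReal.tsum_mul_left]; push_cast; gcongr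
  have key := ofReal_two_rpow_neg_le_measure_compl_symmRects_nat (fun _ => measurableSet_Icc)
    (fun _ => measurableSet_Icc) (fun i => measure_mono_null (hAB i) (measure_singleton _)) hL
  rw [NNReal.coe_mul, NNReal.coe_ofNat] at key
  exact key.trans measure_compl_symmRects_le_two_mul_volume_triangle_diff

end Triangle

theorem triangle_axis_parallel_squares_lower_bound
    (p : ℕ → ℝ × ℝ) (l : ℕ → ℝ) (hl : ∀ i, 0 ≤ l i)
    (hsub : ∀ i, Set.Icc (p i) (p i + (l i, l i)) ⊆
      {q : ℝ × ℝ | 0 ≤ q.1 ∧ q.1 ≤ 1 ∧ 0 ≤ q.2 ∧ q.2 ≤ q.1}) :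
    (∀ ε : ℝ, 0 < ε → ε < 1 →
      ENNReal.ofReal ((1 - ε) / 2) ≤ volume (⋃ i, Set.Icc (p i) (p i + (l i, l i))) →
      ENNReal.ofReal (1 / 2 * Real.logb 2 (1 / ε)) ≤ ∑' i, ENNReal.ofReal (l i)) ∧
    (volume ({q : ℝ × ℝ | 0 ≤ q.1 ∧ q.1 ≤ 1 ∧ 0 ≤ q.2 ∧ q.2 ≤ q.1} \
        ⋃ i, Set.Icc (p i) (p i + (l i, l i))) = 0 →
      ∑' i, ENNReal.ofReal (l i) = ⊤) := by
  refine ⟨fun ε hε₀ hε₁ hvol => ?_, fun hnull => ?_⟩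
  · rcases eq_or_ne (∑' i, ENNReal.ofReal (l i)) ⊤ with htop | hfin
    · simp [htop]
    lift ∑' i, ENNReal.ofReal (l i) to ℝ≥0 using hfin with σ hσ
    have h := (ofReal_two_rpow_neg_le_two_mul_volume_triangle_diff hl hsub hσ.ge).trans
      (two_mul_volume_triangle_diff_le (.iUnion fun _ => measurableSet_Icc) (iUnion_subset hsub)
        hε₀.le hε₁.le hvol)
    rw [ENNReal.ofReal_le_ofReal_iff hε₀.le, ← Real.le_logb_iff_rpow_le one_lt_two hε₀] at h
    rw [← ENNReal.ofReal_coe_nnreal, one_div ε, Real.logb_inv]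
    exact ENNReal.ofReal_le_ofReal (by linarith)
  · by_contra hfin
    lift ∑' i, ENNReal.ofReal (l i) to ℝ≥0 using hfin with σ hσ
    have h := ofReal_two_rpow_neg_le_two_mul_volume_triangle_diff hl hsub hσ.ge
    rw [triangle, hnull, mul_zero, nonpos_iff_eq_zero, ENNReal.ofReal_eq_zero] at h
    exact (Real.rpow_pos_of_pos two_pos _).not_ge h
end
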